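/- arXiv:2503.17563 — 6 statements merged into one kernel-verified Lean document; each statement's English description precedes it below -/
import Mathlib

section
/- Two n-tuples of points in Σ ⊆ ℝ_{≥0}^r determine the same combinatorial type of n-marked grid subdivision if and only if, for each coordinate j ∈ {1,...,r}, the induced total preorders on the values 0, u_1^{(j)}, ..., u_n^{(j)} agree; i.e., the combinatorial type is equivalent to the data of the r total preorders (T_1, ..., T_r). -/
/-!
STATEMENT 1 (Remark 2.10): two `n`-tuples of points in `Σ = ℝ_{≥0}^r`
determine the same combinatorial type of `n`-marked grid subdivision if and
only if, for each coordinate `j`, the induced total preorders on the values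
`0, u_1^{(j)}, …, u_n^{(j)}` agree.
-/

noncomputable section

/-- Vertex set of the subdivision of the `j`-th ray determined by the tuple `u`. -/
def Vset {n r : ℕ} (u : Fin n → Fin r → ℝ) (j : Fin r) : Set ℝ :=
  insert 0 (Set.range fun i => u i j)

/-- Closed cells (faces) of the polyhedral subdivision of `ℝ_{≥0}` with vertex
set `V`: vertices, bounded edges between consecutive vertices, and the
unbounded edge. -/
def cells1 (V : Set ℝ) : Set (Set ℝ) :=
  {I | (∃ v ∈ V, I = {v}) ∨
       (∃ a ∈ V, ∃ b ∈ V, a < b ∧ (∀ c ∈ V, ¬(a < c ∧ c < b)) ∧ I = Set.Icc a b) ∨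
       (∃ a ∈ V, (∀ c ∈ V, c ≤ a) ∧ I = Set.Ici a)}

/-- Closed cells (faces) of the grid subdivision of `ℝ_{≥0}^r` determined by
the tuple `u`: products of 1-dimensional cells. -/
def gridCells {n r : ℕ} (u : Fin n → Fin r → ℝ) : Set (Set (Fin r → ℝ)) :=
  {C | ∃ I : Fin r → Set ℝ, (∀ j, I j ∈ cells1 (Vset u j)) ∧
        C = {x | ∀ j, x j ∈ I j}}

/-- The face of the orthant `Σ = ℝ_{≥0}^r` supporting a cell, recorded via the
set of coordinates not identically vanishing on the cell.  This encodes the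
map of face posets `𝓕_𝒫 → 𝓕_Σ`. -/
def suppFace {r : ℕ} (C : Set (Fin r → ℝ)) : Set (Fin r) := {j | ∃ x ∈ C, x j ≠ 0}

/-- Two tuples have the same combinatorial type when there is an isomorphism
of the face posets of the associated grid subdivisions which lies over the
face poset of `Σ` and preserves the markings (the vertex `{u i}` is marked by
the label `i`). -/
def SameCombType {n r : ℕ} (u u' : Fin n → Fin r → ℝ) : Prop :=
  ∃ e : {C // C ∈ gridCells u} ≃o {C // C ∈ gridCells u'},
    (∀ C : {C // C ∈ gridCells u},
        suppFace ((e C : {C // C ∈ gridCells u'}) : Set (Fin r → ℝ)) =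
          suppFace (C : Set (Fin r → ℝ))) ∧
    (∀ i : Fin n, ∀ h : ({u i} : Set (Fin r → ℝ)) ∈ gridCells u,
        ((e ⟨{u i}, h⟩ : {C // C ∈ gridCells u'}) : Set (Fin r → ℝ)) =
          ({u' i} : Set (Fin r → ℝ)))

/-- The list of values `(0, u_1^{(j)}, …, u_n^{(j)})`, indexed by
`Option (Fin n)` with `none` standing for the symbol `0`. -/
def val {n r : ℕ} (u : Fin n → Fin r → ℝ) (j : Fin r) : Option (Fin n) → ℝ :=
  fun a => a.elim 0 fun i => u i j

/-!
If the preorders agree, then for each `j` there is an order automorphism `f_j` of `ℝ` sending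
`u_i^{(j)}` to `u'_i^{(j)}` and fixing `0` (piecewise-linear interpolation). The product map
`x ↦ (f_j (x_j))_j` sends cells to cells, preserves supports and sends `u_i` to `u'_i`, so taking
images is the required isomorphism of face posets.

Conversely, the vertices of the subdivision are the minimal cells, and two vertices lie in a
common cell iff in every coordinate they are equal or consecutive. Hence the rank of `p_j`
among the values `0, u_1^{(j)}, …, u_n^{(j)}` is the number of steps "lie in a common cell"
needed to reach `p` from a vertex with `p_j = 0`, i.e. one with `j` outside its support.
This description is intrinsic to the poset with its map to `𝓕_Σ`, so an isomorphism preserving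
markings preserves the rank of every `u_i^{(j)}`, and ranks determine the preorders.
-/

def reachWithin {α : Type*} [Preorder α] (Z : α → Prop) : ℕ → α → Prop
  | 0, a => IsMin a ∧ Z a
  | k + 1, a => IsMin a ∧ ∃ b, reachWithin Z k b ∧ ∃ c, a ≤ c ∧ b ≤ c

theorem OrderIso.reachWithin_apply_iff {α β : Type*} [PartialOrder α] [PartialOrder β]
    (e : α ≃o β) {Z : α → Prop} {Z' : β → Prop} (hZ : ∀ a, Z' (e a) ↔ Z a) (k : ℕ) (a : α) :
    reachWithin Z' k (e a) ↔ reachWithin Z k a := by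
  induction k generalizing a with
  | zero => exact and_congr e.toInitialSeg.isMin_apply_iff (hZ a)
  | succ k ih =>
    refine and_congr e.toInitialSeg.isMin_apply_iff ?_
    simp only [e.surjective.exists, ih, e.le_iff_le]

section Interpolation

open Finset

variable {𝕜 : Type*} [Field 𝕜] [LinearOrder 𝕜] [IsStrictOrderedRing 𝕜]

theorem exists_orderIso_eqOn_Iic_apply_eq {m a b : 𝕜} (ha : m < a) (hb : m < b) :
    ∃ g : 𝕜 ≃o 𝕜, (∀ t ≤ m, g t = t) ∧ g a = b := by
  set c := (b - m) / (a - m)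
  have hc : 0 < c := div_pos (sub_pos.2 hb) (sub_pos.2 ha)
  set g : 𝕜 → 𝕜 := fun t => if t ≤ m then t else m + c * (t - m)
  have hmono : StrictMono g := by
    intro s t hst
    simp only [g]
    split_ifs with hs ht ht
    · exact hst
    · nlinarith
    · exact absurd (hst.le.trans ht) hs
    · nlinarith
  have hsurj : Function.Surjective g := by
    intro s
    by_cases hs : s ≤ m
    · exact ⟨s, if_pos hs⟩
    · refine ⟨m + (s - m) / c, ?_⟩
      have : 0 < (s - m) / c := div_pos (sub_pos.2 (not_le.1 hs)) hc
      simp only [g, if_neg (show ¬ m + (s - m) / c ≤ m by linarith)]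
      field_simp
      ring
  refine ⟨StrictMono.orderIsoOfSurjective g hmono hsurj, fun t ht => if_pos ht, ?_⟩
  simp only [StrictMono.coe_orderIsoOfSurjective, g, if_neg (not_le.2 ha), c]
  field_simp [(sub_pos.2 ha).ne']
  ring

/-- Induction on the points in increasing order of `x`: a new maximum is put in place by an
automorphism that is the identity below all points already placed. -/
theorem exists_orderIso_apply_eq {ι : Type*} [Finite ι] (x y : ι → 𝕜)
    (hxy : ∀ a b, x a ≤ x b ↔ y a ≤ y b) : ∃ f : 𝕜 ≃o 𝕜, ∀ a, f (x a) = y a := by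
  classical
  cases nonempty_fintype ι
  suffices ∀ s : Finset ι, ∃ f : 𝕜 ≃o 𝕜, ∀ a ∈ s, f (x a) = y a by
    obtain ⟨f, hf⟩ := this univ
    exact ⟨f, fun a => hf a (mem_univ a)⟩
  intro s
  induction s using Finset.induction_on_max_value x with
  | empty => exact ⟨OrderIso.refl 𝕜, by simp⟩
  | insert a s _ hmax ih =>
    obtain ⟨f, hf⟩ := ih
    by_cases htie : ∃ b ∈ s, x b = x a
    · obtain ⟨b, hb, hba⟩ := htie
      have hyba : y b = y a := le_antisymm ((hxy b a).1 hba.le) ((hxy a b).1 hba.ge)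
      refine ⟨f, forall_mem_insert _ _ _ |>.2 ⟨?_, hf⟩⟩
      rw [← hba, hf b hb, hyba]
    push Not at htie
    have hxlt : ∀ b ∈ s, x b < x a := fun b hb => (hmax b hb).lt_of_ne (htie b hb)
    have hylt : ∀ b ∈ s, y b < y a := fun b hb =>
      lt_of_not_ge fun h => (hxlt b hb).not_ge ((hxy a b).2 h)
    obtain ⟨m, hm, hma, hmb⟩ : ∃ m, (∀ b ∈ s, y b ≤ m) ∧ m < f (x a) ∧ m < y a := by
      rcases s.eq_empty_or_nonempty with rfl | hs
      · exact ⟨min (f (x a)) (y a) - 1, by simp, by linarith [min_le_left (f (x a)) (y a)],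
          by linarith [min_le_right (f (x a)) (y a)]⟩
      obtain ⟨b, hb, hbmax⟩ := s.exists_max_image y hs
      exact ⟨y b, hbmax, hf b hb ▸ f.lt_iff_lt.2 (hxlt b hb), hylt b hb⟩
    obtain ⟨g, hg, hga⟩ := exists_orderIso_eqOn_Iic_apply_eq hma hmb
    refine ⟨f.trans g, forall_mem_insert _ _ _ |>.2 ⟨hga, fun b hb => ?_⟩⟩
    simp only [OrderIso.trans_apply, hf b hb, hg _ (hm b hb)]

end Interpolation

section Rank

open Finset

variable {α : Type*} [LinearOrder α] {s : Finset α} {a x y : α}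

def rankIn (s : Finset α) (x : α) : ℕ := #{y ∈ s | y < x}

theorem rankIn_mono (s : Finset α) : Monotone (rankIn s) := fun _ _ hxy =>
  card_le_card fun _ hz => by
    simp only [mem_filter] at hz ⊢
    exact ⟨hz.1, hz.2.trans_le hxy⟩

theorem rankIn_lt_rankIn (hx : x ∈ s) (hxy : x < y) : rankIn s x < rankIn s y :=
  card_lt_card <| (ssubset_iff_of_subset fun _ hz => by
    simp only [mem_filter] at hz ⊢
    exact ⟨hz.1, hz.2.trans hxy⟩).2 ⟨x, by simp [hx, hxy]⟩

theorem rankIn_le_rankIn_iff (hy : y ∈ s) : rankIn s x ≤ rankIn s y ↔ x ≤ y :=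
  ⟨fun h => not_lt.1 fun hyx => (rankIn_lt_rankIn hy hyx).not_ge h, fun h => rankIn_mono s h⟩

theorem rankIn_eq_zero_iff (ha : IsLeast (s : Set α) a) (hx : x ∈ s) : rankIn s x = 0 ↔ x = a := by
  refine ⟨fun h => ?_, fun h => ?_⟩
  · refine le_antisymm (not_lt.1 fun hax => ?_) (ha.2 hx)
    exact (card_pos.2 ⟨a, mem_filter.2 ⟨ha.1, hax⟩⟩).ne' h
  · subst h
    simpa [rankIn, filter_eq_empty_iff] using fun y hy => ha.2 hy

theorem rankIn_eq_add_one (ha : a ∈ s) (hax : a < x) (hgap : ∀ c ∈ s, ¬(a < c ∧ c < x)) :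
    rankIn s x = rankIn s a + 1 := by
  have : ({y ∈ s | y < x} : Finset α) = insert a {y ∈ s | y < a} := by
    ext c
    simp only [mem_filter, mem_insert]
    constructor
    · rintro ⟨hc, hcx⟩
      rcases lt_trichotomy c a with h | h | h
      · exact Or.inr ⟨hc, h⟩
      · exact Or.inl h
      · exact absurd ⟨h, hcx⟩ (hgap c hc)
    · rintro (rfl | ⟨hc, hca⟩)
      · exact ⟨ha, hax⟩
      · exact ⟨hc, hca.trans hax⟩
  rw [rankIn, this, card_insert_of_notMem (by simp), rankIn]

theorem exists_pred_of_rankIn_eq_add_one {k : ℕ} (h : rankIn s x = k + 1) :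
    ∃ a ∈ s, a < x ∧ (∀ c ∈ s, ¬(a < c ∧ c < x)) ∧ rankIn s a = k := by
  have hne : ({y ∈ s | y < x} : Finset α).Nonempty := card_pos.1 (h.trans_gt k.succ_pos)
  set w := ({y ∈ s | y < x} : Finset α).max' hne
  obtain ⟨hws, hwx⟩ := mem_filter.1 (max'_mem _ hne)
  have hgap : ∀ c ∈ s, ¬(w < c ∧ c < x) := fun c hc hlt =>
    hlt.1.not_ge (le_max' _ c (mem_filter.2 ⟨hc, hlt.2⟩))
  exact ⟨w, hws, hwx, hgap, Nat.add_right_cancel ((rankIn_eq_add_one hws hwx hgap).symm.trans h)⟩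

end Rank

section Grid

variable {n r : ℕ} {u u' : Fin n → Fin r → ℝ}

def vertexFinset (u : Fin n → Fin r → ℝ) (j : Fin r) : Finset ℝ :=
  insert 0 (Finset.univ.image fun i => u i j)

theorem mem_vertexFinset {j : Fin r} {x : ℝ} : x ∈ vertexFinset u j ↔ x ∈ Vset u j := by
  simp [vertexFinset, Vset]

theorem Vset_eq_range (u : Fin n → Fin r → ℝ) (j : Fin r) : Vset u j = Set.range (val u j) := by
  ext x
  simp [Vset, val, Option.exists, eq_comm]

theorem val_mem_vertexFinset (u : Fin n → Fin r → ℝ) (j : Fin r) (a : Option (Fin n)) :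
    val u j a ∈ vertexFinset u j :=
  mem_vertexFinset.2 (Vset_eq_range u j ▸ ⟨a, rfl⟩)

theorem isLeast_vertexFinset (hu : ∀ i j, 0 ≤ u i j) (j : Fin r) :
    IsLeast (vertexFinset u j : Set ℝ) 0 := by
  refine ⟨mem_vertexFinset.2 (Or.inl rfl), fun x hx => ?_⟩
  rcases mem_vertexFinset.1 hx with rfl | ⟨i, rfl⟩
  exacts [le_rfl, hu i j]

theorem rankIn_vertexFinset_zero (hu : ∀ i j, 0 ≤ u i j) (j : Fin r) :
    rankIn (vertexFinset u j) 0 = 0 :=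
  (rankIn_eq_zero_iff (isLeast_vertexFinset hu j) (isLeast_vertexFinset hu j).1).2 rfl

theorem exists_mem_of_mem_cells1 {V c : Set ℝ} (hc : c ∈ cells1 V) : ∃ a ∈ V, a ∈ c := by
  rcases hc with ⟨v, hv, rfl⟩ | ⟨a, ha, b, -, hab, -, rfl⟩ | ⟨a, ha, -, rfl⟩
  exacts [⟨v, hv, rfl⟩, ⟨a, ha, Set.left_mem_Icc.2 hab.le⟩, ⟨a, ha, Set.self_mem_Ici⟩]

theorem exists_vertex_mem_of_mem_gridCells {C : Set (Fin r → ℝ)} (hC : C ∈ gridCells u) :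
    ∃ p, (∀ j, p j ∈ Vset u j) ∧ p ∈ C := by
  obtain ⟨I, hI, rfl⟩ := hC
  choose a haV hac using fun j => exists_mem_of_mem_cells1 (hI j)
  exact ⟨a, haV, hac⟩

theorem singleton_mem_gridCells_iff {p : Fin r → ℝ} :
    {p} ∈ gridCells u ↔ ∀ j, p j ∈ Vset u j := by
  refine ⟨fun h => ?_, fun hp => ⟨fun j => {p j}, fun j => Or.inl ⟨p j, hp j, rfl⟩, ?_⟩⟩
  · obtain ⟨q, hq, hqp⟩ := exists_vertex_mem_of_mem_gridCells h
    rwa [← Set.mem_singleton_iff.1 hqp]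
  · ext x
    simp [funext_iff]

theorem isMin_iff_exists_eq_singleton (C : {C // C ∈ gridCells u}) :
    IsMin C ↔ ∃ p, C.1 = {p} := by
  constructor
  · intro h
    obtain ⟨p, hp, hpC⟩ := exists_vertex_mem_of_mem_gridCells C.2
    have hle : (⟨{p}, singleton_mem_gridCells_iff.2 hp⟩ : {C // C ∈ gridCells u}) ≤ C :=
      Set.singleton_subset_iff.2 hpC
    exact ⟨p, congrArg Subtype.val ((h hle).antisymm hle)⟩
  · rintro ⟨p, hp⟩ D hD
    obtain ⟨q, -, hqD⟩ := exists_vertex_mem_of_mem_gridCells D.2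
    have hDp : D.1 = {p} := (Set.Nonempty.subset_singleton_iff ⟨q, hqD⟩).1 (hp ▸ hD)
    exact (hp.trans hDp.symm).le

theorem mem_suppFace_singleton {p : Fin r → ℝ} {j : Fin r} : j ∈ suppFace {p} ↔ p j ≠ 0 := by
  simp [suppFace]

theorem rankIn_le_add_one_of_mem_cells1 {s : Finset ℝ} {c : Set ℝ} (hc : c ∈ cells1 s)
    {x y : ℝ} (hx : x ∈ c) (hy : y ∈ c) (hys : y ∈ s) : rankIn s y ≤ rankIn s x + 1 := by
  rcases hc with ⟨v, -, rfl⟩ | ⟨a, ha, b, -, hab, hgap, rfl⟩ | ⟨a, -, hmax, rfl⟩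
  · rw [Set.mem_singleton_iff.1 hx, Set.mem_singleton_iff.1 hy]
    exact Nat.le_succ _
  · calc rankIn s y ≤ rankIn s b := rankIn_mono s hy.2
      _ = rankIn s a + 1 := rankIn_eq_add_one ha hab hgap
      _ ≤ rankIn s x + 1 := Nat.add_le_add_right (rankIn_mono s hx.1) 1
  · exact (rankIn_mono s ((hmax y hys).trans hx)).trans (Nat.le_succ _)

theorem rankIn_le_add_one_of_mem_gridCells {C : Set (Fin r → ℝ)} (hC : C ∈ gridCells u)
    {p q : Fin r → ℝ} (hp : p ∈ C) (hq : q ∈ C) {j : Fin r} (hqj : q j ∈ Vset u j) :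
    rankIn (vertexFinset u j) (q j) ≤ rankIn (vertexFinset u j) (p j) + 1 := by
  obtain ⟨I, hI, rfl⟩ := hC
  have hV : (vertexFinset u j : Set ℝ) = Vset u j := Set.ext fun _ => mem_vertexFinset
  exact rankIn_le_add_one_of_mem_cells1 (hV ▸ hI j) (hp j) (hq j) (mem_vertexFinset.2 hqj)

theorem exists_mem_gridCells_mem_update {p : Fin r → ℝ} (hp : ∀ l, p l ∈ Vset u l) {j : Fin r}
    {a : ℝ} (ha : a ∈ Vset u j) (hap : a < p j) (hgap : ∀ c ∈ Vset u j, ¬(a < c ∧ c < p j)) :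
    ∃ C ∈ gridCells u, p ∈ C ∧ Function.update p j a ∈ C := by
  set I := Function.update (fun l => ({p l} : Set ℝ)) j (Set.Icc a (p j))
  refine ⟨{x | ∀ l, x l ∈ I l}, ⟨I, fun l => ?_, rfl⟩, fun l => ?_, fun l => ?_⟩ <;>
    rcases eq_or_ne l j with rfl | hl <;> simp only [I, Function.update_apply, if_true, *]
  · exact Or.inr (Or.inl ⟨a, ha, p l, hp l, hap, hgap, rfl⟩)
  · exact Or.inl ⟨p l, hp l, rfl⟩
  · exact Set.right_mem_Icc.2 hap.le
  · rfl
  · exact Set.left_mem_Icc.2 hap.le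
  · rfl

theorem exists_vertex_rankIn_eq_mem_gridCells {p : Fin r → ℝ} (hp : ∀ l, p l ∈ Vset u l)
    {j : Fin r} {k : ℕ} (h : rankIn (vertexFinset u j) (p j) = k + 1) :
    ∃ q, (∀ l, q l ∈ Vset u l) ∧ rankIn (vertexFinset u j) (q j) = k ∧
      ∃ C ∈ gridCells u, p ∈ C ∧ q ∈ C := by
  obtain ⟨a, ha, hap, hgap, hak⟩ := exists_pred_of_rankIn_eq_add_one h
  have haV := mem_vertexFinset.1 ha
  refine ⟨Function.update p j a, fun l => ?_, by simpa using hak,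
    exists_mem_gridCells_mem_update hp haV hap fun c hc => hgap c (mem_vertexFinset.2 hc)⟩
  rcases eq_or_ne l j with rfl | hl
  · simpa using haV
  · simpa [hl] using hp l

end Grid

section Forward

variable {n r : ℕ} {u u' : Fin n → Fin r → ℝ}

theorem reachWithin_notMem_suppFace_iff (hu : ∀ i j, 0 ≤ u i j) (j : Fin r) (k : ℕ)
    (C : {C // C ∈ gridCells u}) :
    reachWithin (fun D : {C // C ∈ gridCells u} => j ∉ suppFace D.1) k C ↔
      ∃ p, C.1 = {p} ∧ rankIn (vertexFinset u j) (p j) ≤ k := by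
  have hvert : ∀ {D : {C // C ∈ gridCells u}} {p}, D.1 = {p} → ∀ l, p l ∈ Vset u l :=
    fun {D} _ hp => singleton_mem_gridCells_iff.1 (hp ▸ D.2)
  induction k generalizing C with
  | zero =>
    simp only [reachWithin, isMin_iff_exists_eq_singleton, nonpos_iff_eq_zero]
    refine ⟨fun ⟨⟨p, hp⟩, hj⟩ => ⟨p, hp, ?_⟩, fun ⟨p, hp, hrank⟩ => ⟨⟨p, hp⟩, ?_⟩⟩
    · rw [hp, mem_suppFace_singleton, not_not] at hj
      rw [rankIn_eq_zero_iff (isLeast_vertexFinset hu j) (mem_vertexFinset.2 (hvert hp j))]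
      exact hj
    · rw [hp, mem_suppFace_singleton, not_not]
      exact (rankIn_eq_zero_iff (isLeast_vertexFinset hu j) (mem_vertexFinset.2 (hvert hp j))).1
        hrank
  | succ k ih =>
    constructor
    · rintro ⟨hmin, D, hD, E, hCE, hDE⟩
      obtain ⟨p, hp⟩ := (isMin_iff_exists_eq_singleton C).1 hmin
      obtain ⟨q, hq, hqk⟩ := (ih D).1 hD
      have hpE : p ∈ E.1 := hCE (hp ▸ rfl)
      have hqE : q ∈ E.1 := hDE (hq ▸ rfl)
      exact ⟨p, hp, (rankIn_le_add_one_of_mem_gridCells E.2 hqE hpE (hvert hp j)).trans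
        (Nat.add_le_add_right hqk 1)⟩
    · rintro ⟨p, hp, hpk⟩
      have hmin := (isMin_iff_exists_eq_singleton C).2 ⟨p, hp⟩
      rcases hpk.lt_or_eq with hlt | heq
      · exact ⟨hmin, C, (ih C).2 ⟨p, hp, Nat.lt_succ_iff.1 hlt⟩, C, le_rfl, le_rfl⟩
      obtain ⟨q, hqV, hqk, E, hE, hpE, hqE⟩ := exists_vertex_rankIn_eq_mem_gridCells (hvert hp) heq
      exact ⟨hmin, ⟨{q}, singleton_mem_gridCells_iff.2 hqV⟩, (ih _).2 ⟨q, rfl, hqk.le⟩, ⟨E, hE⟩,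
        show C.1 ⊆ E by rw [hp]; exact Set.singleton_subset_iff.2 hpE,
        Set.singleton_subset_iff.2 hqE⟩

theorem rankIn_vertexFinset_eq_of_sameCombType (hu : ∀ i j, 0 ≤ u i j)
    (hu' : ∀ i j, 0 ≤ u' i j) (h : SameCombType u u') (i : Fin n) (j : Fin r) :
    rankIn (vertexFinset u' j) (u' i j) = rankIn (vertexFinset u j) (u i j) := by
  obtain ⟨e, hsupp, hmark⟩ := h
  have hui : {u i} ∈ gridCells u :=
    singleton_mem_gridCells_iff.2 fun l => Vset_eq_range u l ▸ ⟨some i, rfl⟩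
  have hk : ∀ k, rankIn (vertexFinset u' j) (u' i j) ≤ k ↔ rankIn (vertexFinset u j) (u i j) ≤ k :=
    fun k => by
      have := e.reachWithin_apply_iff (Z := fun C => j ∉ suppFace C.1)
        (Z' := fun C => j ∉ suppFace C.1) (fun C => by simp only [hsupp C]) k ⟨{u i}, hui⟩
      rw [reachWithin_notMem_suppFace_iff hu', reachWithin_notMem_suppFace_iff hu, hmark i hui]
        at this
      simpa [eq_comm] using this
  exact le_antisymm ((hk _).2 le_rfl) ((hk _).1 le_rfl)

theorem val_le_val_iff_of_sameCombType (hu : ∀ i j, 0 ≤ u i j) (hu' : ∀ i j, 0 ≤ u' i j)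
    (h : SameCombType u u') (j : Fin r) (a b : Option (Fin n)) :
    val u j a ≤ val u j b ↔ val u' j a ≤ val u' j b := by
  have hrank : ∀ c, rankIn (vertexFinset u' j) (val u' j c) =
      rankIn (vertexFinset u j) (val u j c) := by
    rintro (_ | i)
    · exact (rankIn_vertexFinset_zero hu' j).trans (rankIn_vertexFinset_zero hu j).symm
    · exact rankIn_vertexFinset_eq_of_sameCombType hu hu' h i j
  rw [← rankIn_le_rankIn_iff (val_mem_vertexFinset u j b),
    ← rankIn_le_rankIn_iff (val_mem_vertexFinset u' j b), hrank, hrank]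

end Forward

section Backward

variable {n r : ℕ} {u u' : Fin n → Fin r → ℝ}

theorem image_mem_cells1 (g : ℝ ≃o ℝ) {V c : Set ℝ} (hc : c ∈ cells1 V) :
    g '' c ∈ cells1 (g '' V) := by
  rcases hc with ⟨v, hv, rfl⟩ | ⟨a, ha, b, hb, hab, hgap, rfl⟩ | ⟨a, ha, hmax, rfl⟩
  · exact Or.inl ⟨g v, Set.mem_image_of_mem g hv, Set.image_singleton⟩
  · refine Or.inr (Or.inl ⟨g a, Set.mem_image_of_mem g ha, g b, Set.mem_image_of_mem g hb,
      g.lt_iff_lt.2 hab, ?_, g.image_Icc a b⟩)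
    rintro _ ⟨c, hc, rfl⟩
    simpa only [g.lt_iff_lt] using hgap c hc
  · refine Or.inr (Or.inr ⟨g a, Set.mem_image_of_mem g ha, ?_, g.image_Ici a⟩)
    rintro _ ⟨c, hc, rfl⟩
    exact g.le_iff_le.2 (hmax c hc)

theorem image_piCongrRight_mem_gridCells (f : Fin r → ℝ ≃o ℝ)
    (hf : ∀ j, f j '' Vset u j = Vset u' j) {C : Set (Fin r → ℝ)} (hC : C ∈ gridCells u) :
    Equiv.piCongrRight (fun j => (f j).toEquiv) '' C ∈ gridCells u' := by
  obtain ⟨I, hI, rfl⟩ := hC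
  refine ⟨fun j => f j '' I j, fun j => hf j ▸ image_mem_cells1 (f j) (hI j), ?_⟩
  ext x
  simp [Equiv.image_eq_preimage_symm, OrderIso.image_eq_preimage_symm]

theorem suppFace_image_piCongrRight (f : Fin r → ℝ ≃o ℝ) (hf : ∀ j, f j 0 = 0)
    (C : Set (Fin r → ℝ)) :
    suppFace (Equiv.piCongrRight (fun j => (f j).toEquiv) '' C) = suppFace C := by
  ext j
  simp only [suppFace, Set.mem_ofPred_eq, Set.exists_mem_image]
  simp [(f j).injective.ne_iff' (hf j)]

theorem sameCombType_of_val_le_val_iff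
    (h : ∀ j a b, val u j a ≤ val u j b ↔ val u' j a ≤ val u' j b) : SameCombType u u' := by
  choose f hf using fun j => exists_orderIso_apply_eq (val u j) (val u' j) (h j)
  have hV : ∀ j, f j '' Vset u j = Vset u' j := fun j => by
    rw [Vset_eq_range, Vset_eq_range, ← Set.range_comp]
    exact congrArg Set.range (funext (hf j))
  have hV' : ∀ j, (f j).symm '' Vset u' j = Vset u j := fun j => by
    rw [← hV, OrderIso.symm_image_image]
  set Φ := Equiv.piCongrRight fun j => (f j).toEquiv
  have hΦsymm : Equiv.piCongrRight (fun j => (f j).symm.toEquiv) = Φ.symm := rfl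
  have hmem : ∀ C, C ∈ gridCells u ↔ Φ.toOrderIsoSet C ∈ gridCells u' := fun C =>
    ⟨image_piCongrRight_mem_gridCells f hV, fun hC => by
      simpa only [hΦsymm, Equiv.toOrderIsoSet_apply, Φ.symm_image_image] using
        image_piCongrRight_mem_gridCells (fun j => (f j).symm) hV' hC⟩
  refine ⟨{ toEquiv := Φ.toOrderIsoSet.toEquiv.subtypeEquiv hmem,
            map_rel_iff' := Φ.toOrderIsoSet.le_iff_le },
    fun C => suppFace_image_piCongrRight f (fun j => hf j none) C, fun i _ => ?_⟩
  change Φ '' {u i} = {u' i}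
  rw [Set.image_singleton]
  exact congrArg _ (funext fun j => hf j (some i))

end Backward

/-- Remark 2.10: the combinatorial type of an `n`-tuple is equivalent to the
data of the `r` total preorders `(T_1, …, T_r)` on the coordinate values. -/
theorem stmt1 {n r : ℕ} (u u' : Fin n → Fin r → ℝ)
    (hu : ∀ i j, 0 ≤ u i j) (hu' : ∀ i j, 0 ≤ u' i j) :
    SameCombType u u' ↔
      ∀ (j : Fin r) (a b : Option (Fin n)),
        (val u j a ≤ val u j b ↔ val u' j a ≤ val u' j b) :=
  ⟨val_le_val_iff_of_sameCombType hu hu', sameCombType_of_val_le_val_iff⟩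

end
end

section
/- For each i ∈ {1,...,n}, the i-th diagonal section σ_i : Σ^n → Σ × Σ^n, (u_1,...,u_n) ↦ (u_i, u_1,...,u_n), is a morphism of cone complexes from Π_n(Σ) to Π_n^+(Σ): it sends each cone of Π_n(Σ) into a single cone of Π_n^+(Σ), and its image is a union of cones of Π_n^+(Σ). -/
/-!
STATEMENT 4: for each `i`, the diagonal section
`σ_i : Σ^n → Σ × Σ^n, (u_1,…,u_n) ↦ (u_i, u_1,…,u_n)` is a morphism of cone
complexes from `Π_n(Σ)` to `Π_n^+(Σ)`: it is linear and lattice-preserving,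
it sends each cone of `Π_n(Σ)` into a single cone of `Π_n^+(Σ)`, and its
image is a union of cones of `Π_n^+(Σ)`.
-/

open scoped BigOperators

/-- The coordinate cone of `ℝ_{≥0}^r` indexed by a set `S` of coordinates. -/
def coordCone {r : ℕ} (S : Set (Fin r)) : Set (Fin r → ℝ) :=
  {x | (∀ j, 0 ≤ x j) ∧ ∀ j, j ∉ S → x j = 0}

/-- `Σ`: a union of coordinate cones of `ℝ_{≥0}^r`. -/
def SigmaSet {r : ℕ} (F : Set (Set (Fin r))) : Set (Fin r → ℝ) :=
  ⋃ S ∈ F, coordCone S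

/-- Values `(0, (u_a^{(j)})_a)` of a tuple indexed by `ι`. -/
def valI {ι : Type} {r : ℕ} (u : ι → Fin r → ℝ) (j : Fin r) : Option ι → ℝ :=
  fun a => a.elim 0 fun i => u i j

/-- A combinatorial type for tuples indexed by `ι`. -/
def IsTypeFamilyI {ι : Type} {r : ℕ} (T : Fin r → Option ι → Option ι → Prop) : Prop :=
  ∀ j, (∀ a, T j a a) ∧ (∀ a b c, T j a b → T j b c → T j a c) ∧
    (∀ a b, T j a b ∨ T j b a) ∧ (∀ a, T j none a)

/-- The realization cone of a combinatorial type. -/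
def realConeI {ι : Type} {r : ℕ} (T : Fin r → Option ι → Option ι → Prop) :
    Set (ι → Fin r → ℝ) :=
  {u | (∀ i j, 0 ≤ u i j) ∧ ∀ j a b, T j a b → valI u j a ≤ valI u j b}

/-- The `i`-th diagonal section `σ_i : Σ^n → Σ × Σ^n`; an `(n+1)`-tuple is
indexed by `Option (Fin n)`, the first factor carrying label `0` (= `none`). -/
def diagSec {n r : ℕ} (i : Fin n) (u : Fin n → Fin r → ℝ) :
    Option (Fin n) → Fin r → ℝ :=
  fun a => a.elim (u i) u


/-!
A cone of `Π_n(Σ)` is cut out by a combinatorial type `T`, i.e. a total preorder on the labels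
`0, 1, …, n` in each coordinate, with `0` smallest. Since `σ_i u = u ∘ g` for the relabelling
`g : Option (Fin n) → Fin n` sending the new label to `i`, pulling `T` back along `g` gives a type
`T'` with `σ_i(cone T) ⊆ cone T'`. Conversely, a point `w` of `cone T'` has
`w none = w (some i)` (the two labels are tied in `T'`), so `w = σ_i (w ∘ some)` with
`w ∘ some ∈ cone T`; this shows both that `cone T'` lies in `Σ × Σ^n` and, applied to the types
of points of `Σ^n`, that the image of `σ_i` is the union of the cones of their pulled-back types.
-/

section CombinatorialTypes

variable {ι κ : Type} {r : ℕ}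

lemma valI_comp (u : ι → Fin r → ℝ) (f : κ → ι) (j : Fin r) (a : Option κ) :
    valI (u ∘ f) j a = valI u j (a.map f) := by
  rcases a with _ | k <;> rfl

lemma nonneg_of_mem_sigmaSet {F : Set (Set (Fin r))} {x : Fin r → ℝ} (hx : x ∈ SigmaSet F)
    (j : Fin r) : 0 ≤ x j := by
  obtain ⟨S, -, hS, -⟩ := Set.mem_iUnion₂.1 hx
  exact hS j

def pullbackType (f : κ → ι) (T : Fin r → Option ι → Option ι → Prop) :
    Fin r → Option κ → Option κ → Prop :=
  fun j a b => T j (a.map f) (b.map f)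

lemma IsTypeFamilyI.pullbackType {T : Fin r → Option ι → Option ι → Prop}
    (hT : IsTypeFamilyI T) (f : κ → ι) : IsTypeFamilyI (pullbackType f T) := fun j =>
  let ⟨hrefl, htrans, htotal, hnone⟩ := hT j
  ⟨fun _ => hrefl _, fun _ _ _ => htrans _ _ _, fun _ _ => htotal _ _, fun _ => hnone _⟩

lemma comp_mem_realConeI_pullbackType {T : Fin r → Option ι → Option ι → Prop}
    {u : ι → Fin r → ℝ} (hu : u ∈ realConeI T) (f : κ → ι) :
    u ∘ f ∈ realConeI (pullbackType f T) := by
  refine ⟨fun k => hu.1 (f k), fun j a b hab => ?_⟩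
  rw [valI_comp, valI_comp]
  exact hu.2 j _ _ hab

lemma comp_mem_realConeI_of_leftInverse {T : Fin r → Option ι → Option ι → Prop}
    {f : κ → ι} {g : ι → κ} (hfg : Function.LeftInverse f g) {w : κ → Fin r → ℝ}
    (hw : w ∈ realConeI (pullbackType f T)) : w ∘ g ∈ realConeI T := by
  refine ⟨fun k => hw.1 (g k), fun j a b hab => ?_⟩
  have hmap : ∀ c : Option ι, (c.map g).map f = c := fun c => by
    rw [Option.map_map, hfg.comp_eq_id, Option.map_id, id]
  rw [valI_comp, valI_comp]
  exact hw.2 j _ _ (by rwa [pullbackType, hmap, hmap])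

lemma eq_of_mem_realConeI_pullbackType {T : Fin r → Option ι → Option ι → Prop}
    (hrefl : ∀ j a, T j a a) {f : κ → ι} {a b : κ} (hab : f a = f b) {w : κ → Fin r → ℝ}
    (hw : w ∈ realConeI (pullbackType f T)) : w a = w b := by
  funext j
  have hT : ∀ c d : κ, f c = f d → pullbackType f T j (some c) (some d) := fun c d h => by
    simpa [pullbackType, h] using hrefl j (some (f d))
  exact le_antisymm (hw.2 j _ _ (hT a b hab)) (hw.2 j _ _ (hT b a hab.symm))

def typeOf (u : ι → Fin r → ℝ) : Fin r → Option ι → Option ι → Prop :=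
  fun j a b => valI u j a ≤ valI u j b

lemma isTypeFamilyI_typeOf {u : ι → Fin r → ℝ} (hu : ∀ k j, 0 ≤ u k j) :
    IsTypeFamilyI (typeOf u) := fun j =>
  ⟨fun _ => le_rfl, fun _ _ _ => le_trans, fun _ _ => le_total _ _,
    fun a => by rcases a with _ | k; exacts [le_rfl, hu k j]⟩

lemma mem_realConeI_typeOf {u : ι → Fin r → ℝ} (hu : ∀ k j, 0 ≤ u k j) :
    u ∈ realConeI (typeOf u) :=
  ⟨hu, fun _ _ _ hab => hab⟩

/-- A point of the cone of `typeOf u` vanishes wherever `u` does. -/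
lemma mem_sigmaSet_of_mem_realConeI_typeOf {F : Set (Set (Fin r))} {u w : ι → Fin r → ℝ}
    (hu : ∀ k, u k ∈ SigmaSet F) (hw : w ∈ realConeI (typeOf u)) (k : ι) :
    w k ∈ SigmaSet F := by
  obtain ⟨S, hSF, -, hzero⟩ := Set.mem_iUnion₂.1 (hu k)
  refine Set.mem_iUnion₂.2 ⟨S, hSF, fun j => hw.1 k j, fun j hj => ?_⟩
  have hle : valI w j (some k) ≤ valI w j none := hw.2 j _ _ (hzero j hj).le
  exact le_antisymm hle (hw.1 k j)

end CombinatorialTypes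

section DiagonalSection

variable {n r : ℕ}

lemma diagSec_eq_comp (i : Fin n) (u : Fin n → Fin r → ℝ) :
    diagSec i u = u ∘ (Option.getD · i) := by
  funext a
  rcases a with _ | k <;> rfl

lemma diagSec_smul_add (i : Fin n) (c : ℝ) (u w : Fin n → Fin r → ℝ) :
    diagSec i (c • u + w) = c • diagSec i u + diagSec i w := by
  simp only [diagSec_eq_comp]
  rfl

lemma eq_diagSec_of_mem_realConeI_pullbackType
    {T : Fin r → Option (Fin n) → Option (Fin n) → Prop} (hrefl : ∀ j a, T j a a) (i : Fin n)
    {w : Option (Fin n) → Fin r → ℝ}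
    (hw : w ∈ realConeI (pullbackType (Option.getD · i) T)) :
    w = diagSec i (w ∘ some) := by
  rw [diagSec_eq_comp]
  funext a
  exact eq_of_mem_realConeI_pullbackType hrefl (by rfl) hw

lemma mem_sigmaSet_of_mem_realConeI_pullbackType {F : Set (Set (Fin r))}
    {T : Fin r → Option (Fin n) → Option (Fin n) → Prop} (hrefl : ∀ j a, T j a a)
    (hcov : ∀ u ∈ realConeI T, ∀ k, u k ∈ SigmaSet F) (i : Fin n)
    {w : Option (Fin n) → Fin r → ℝ} (hw : w ∈ realConeI (pullbackType (Option.getD · i) T))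
    (a : Option (Fin n)) : w a ∈ SigmaSet F := by
  rw [eq_diagSec_of_mem_realConeI_pullbackType hrefl i hw, diagSec_eq_comp]
  exact hcov _ (comp_mem_realConeI_of_leftInverse (fun _ => rfl) hw) _

lemma image_diagSec_realConeI_subset (i : Fin n)
    (T : Fin r → Option (Fin n) → Option (Fin n) → Prop) :
    diagSec i '' realConeI T ⊆ realConeI (pullbackType (Option.getD · i) T) := by
  rintro _ ⟨u, hu, rfl⟩
  rw [diagSec_eq_comp]
  exact comp_mem_realConeI_pullbackType hu _

lemma image_diagSec_eq_biUnion (F : Set (Set (Fin r))) (i : Fin n) :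
    diagSec i '' {u | ∀ k, u k ∈ SigmaSet F} =
      ⋃ u ∈ {u | ∀ k, u k ∈ SigmaSet F}, realConeI (pullbackType (Option.getD · i) (typeOf u)) := by
  ext w
  simp only [Set.mem_image, Set.mem_iUnion₂]
  constructor
  · rintro ⟨u, hu, rfl⟩
    have hu0 : ∀ k j, 0 ≤ u k j := fun k => nonneg_of_mem_sigmaSet (hu k)
    exact ⟨u, hu, image_diagSec_realConeI_subset i _ ⟨u, mem_realConeI_typeOf hu0, rfl⟩⟩
  · rintro ⟨u, hu, hw⟩
    have hu0 : ∀ k j, 0 ≤ u k j := fun k => nonneg_of_mem_sigmaSet (hu k)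
    have hrefl : ∀ j a, typeOf u j a a := fun j => (isTypeFamilyI_typeOf hu0 j).1
    exact ⟨w ∘ some,
      mem_sigmaSet_of_mem_realConeI_typeOf hu (comp_mem_realConeI_of_leftInverse (fun _ => rfl) hw),
      (eq_diagSec_of_mem_realConeI_pullbackType hrefl i hw).symm⟩

end DiagonalSection

theorem stmt4 (n r : ℕ) (F : Set (Set (Fin r))) (i : Fin n) :
    -- σ_i restricts to a linear map on each cone
    (∀ (c : ℝ) (u w : Fin n → Fin r → ℝ),
        diagSec i (c • u + w) = c • diagSec i u + diagSec i w) ∧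
    -- σ_i is lattice-preserving
    (∀ u : Fin n → Fin r → ℝ, (∀ k j, ∃ z : ℤ, u k j = (z : ℝ)) →
        ∀ a j, ∃ z : ℤ, diagSec i u a j = (z : ℝ)) ∧
    -- σ_i sends each cone of Π_n(Σ) into a single cone of Π_n^+(Σ)
    (∀ T : Fin r → Option (Fin n) → Option (Fin n) → Prop,
        IsTypeFamilyI T → (∀ u ∈ realConeI T, ∀ k : Fin n, u k ∈ SigmaSet F) →
        ∃ T' : Fin r → Option (Option (Fin n)) → Option (Option (Fin n)) → Prop,
          IsTypeFamilyI T' ∧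
          (∀ w ∈ realConeI T', ∀ a : Option (Fin n), w a ∈ SigmaSet F) ∧
          diagSec i '' realConeI T ⊆ realConeI T') ∧
    -- the image of σ_i is a union of cones of Π_n^+(Σ)
    (∃ 𝒯 : Set (Fin r → Option (Option (Fin n)) → Option (Option (Fin n)) → Prop),
        (∀ T' ∈ 𝒯, IsTypeFamilyI T' ∧
          ∀ w ∈ realConeI T', ∀ a : Option (Fin n), w a ∈ SigmaSet F) ∧
        diagSec i '' {u | ∀ k : Fin n, u k ∈ SigmaSet F} =
          ⋃ T' ∈ 𝒯, realConeI T') := by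
  set g : Option (Fin n) → Fin n := (Option.getD · i)
  refine ⟨diagSec_smul_add i, fun u hu a j => by rw [diagSec_eq_comp]; exact hu _ j, ?_, ?_⟩
  · intro T hT hcov
    exact ⟨pullbackType g T, hT.pullbackType g,
      fun _ hw => mem_sigmaSet_of_mem_realConeI_pullbackType (fun j => (hT j).1) hcov i hw,
      image_diagSec_realConeI_subset i T⟩
  · refine ⟨(fun u => pullbackType g (typeOf u)) '' {u | ∀ k, u k ∈ SigmaSet F}, ?_, ?_⟩
    · rintro _ ⟨u, hu, rfl⟩
      have hu0 : ∀ k j, 0 ≤ u k j := fun k => nonneg_of_mem_sigmaSet (hu k)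
      have hT := isTypeFamilyI_typeOf hu0
      exact ⟨hT.pullbackType g,
        fun _ hw => mem_sigmaSet_of_mem_realConeI_pullbackType (fun j => (hT j).1)
          (fun _ => mem_sigmaSet_of_mem_realConeI_typeOf hu) i hw⟩
    · rw [Set.biUnion_image]
      exact image_diagSec_eq_biUnion F i
end

section
/- Let Y, Z be smooth subvarieties of a smooth variety X intersecting transversally, meaning that at every point p there is a regular system of parameters f_1,...,f_d of O_{X,p} with I_Y = (f_1,...,f_{k_1}) and I_Z = (f_{k_1+1},...,f_{k_2}) locally at p. Then under the blow-up Bl_Z X → X, the strict transform of Y equals the total transform of Y. -/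
/-!
STATEMENT 7 (Lemma 2.31): let `Y, Z` be smooth subvarieties of a smooth
variety `X` intersecting transversally: at every point `p` there is a regular
system of parameters `f_1, …, f_d` of `R = 𝒪_{X,p}` with
`I_Y = (f_1, …, f_{k₁})` and `I_Z = (f_{k₁+1}, …, f_{k₂})` locally at `p`.
Then under `Bl_Z X → X` the strict transform of `Y` equals its total
transform.

We formalize the statement in its local-algebraic form at a point: `R` is the
local ring `𝒪_{X,p}` of a smooth variety over an algebraically closed field of
characteristic zero, `f` is a regular system of parameters, and on each chart
of the blow-up of `I_Z` — the chart at the generator `f_b`, namely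
`R[x_a : a]/(f_a - x_a f_b)` — the total transform `I_Y · 𝒪` of `Y` equals the
strict transform, i.e. the saturation of `I_Y · 𝒪` at `f_b`: every element `x`
with `f_b^m x ∈ I_Y · 𝒪` already lies in `I_Y · 𝒪`.
-/

open MvPolynomial

/-- Index set of the chart variables: the generators of `I_Z` other than the
chart generator `f_b`. -/
abbrev chartIdx (d k1 k2 : ℕ) (b : Fin d) :=
  {a : Fin d // k1 ≤ (a : ℕ) ∧ (a : ℕ) < k2 ∧ a ≠ b}

/-- The relations `f_a - x_a f_b` defining the blow-up chart at `f_b`. -/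
noncomputable abbrev relIdeal (R : Type*) [CommRing R] (d k1 k2 : ℕ)
    (f : Fin d → R) (b : Fin d) :
    Ideal (MvPolynomial (chartIdx d k1 k2 b) R) :=
  Ideal.span (Set.range fun a : chartIdx d k1 k2 b =>
    (C (f a.1) - X a * C (f b) : MvPolynomial (chartIdx d k1 k2 b) R))

/-- The blow-up chart `R[x_a]/(f_a - x_a f_b)`. -/
abbrev BlChart (R : Type*) [CommRing R] (d k1 k2 : ℕ) (f : Fin d → R) (b : Fin d) :=
  MvPolynomial (chartIdx d k1 k2 b) R ⧸ relIdeal R d k1 k2 f b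

/-- The canonical map `R → R[x_a]/(f_a - x_a f_b)`. -/
noncomputable abbrev chartMap (R : Type*) [CommRing R] (d k1 k2 : ℕ)
    (f : Fin d → R) (b : Fin d) : R →+* BlChart R d k1 k2 f b :=
  (Ideal.Quotient.mk (relIdeal R d k1 k2 f b)).comp
    (C : R →+* MvPolynomial (chartIdx d k1 k2 b) R)

/-! In a Noetherian local ring a permutation of a regular sequence lying in the maximal ideal
is again regular, so each `f_c` is a nonzerodivisor modulo the ideal generated by any set of the
other `f_j`. On the chart the relations `f_a - x_a f_b` are imposed one at a time: if `f_b` is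
regular modulo `J` and `f_a` is regular modulo `J + (f_b)`, then `f_b` stays regular modulo
`J + (f_a - x_a f_b)`. Starting from `J = I_Y · R[x]`, this makes `f_b` a nonzerodivisor modulo
the total transform, which is therefore saturated at `f_b`. -/

open Ideal RingTheory.Sequence

section Regularity

variable {R : Type*} [CommRing R]

theorem Ideal.isSMulRegular_quotient_iff {I : Ideal R} {z : R} :
    IsSMulRegular (R ⧸ I) z ↔ ∀ p, z * p ∈ I → p ∈ I :=
  isSMulRegular_quotient_iff_mem_of_smul_mem I z

theorem Ideal.smul_top_eq_self (I : Ideal R) : I • (⊤ : Submodule R R) = I := by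
  rw [smul_eq_mul, Ideal.mul_top]

theorem Ideal.ofList_take_ofFn {d : ℕ} (f : Fin d → R) (i : ℕ) :
    Ideal.ofList ((List.ofFn f).take i) = span (f '' {j | (j : ℕ) < i}) := by
  refine congrArg span (Set.ext fun r => ?_)
  simp only [Set.mem_ofPred_eq, List.mem_take_iff_getElem, List.getElem_ofFn, List.length_ofFn,
    lt_min_iff, Set.mem_image]
  exact ⟨fun ⟨j, hj, hr⟩ => ⟨⟨j, hj.2⟩, hj.1, hr⟩, fun ⟨j, hj, hr⟩ => ⟨j, ⟨hj, j.2⟩, hr⟩⟩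

theorem RingTheory.Sequence.isWeaklyRegular_ofFn_iff {d : ℕ} (f : Fin d → R) :
    IsWeaklyRegular R (List.ofFn f) ↔
      ∀ i : Fin d, IsSMulRegular (R ⧸ span (f '' {j | (j : ℕ) < i})) (f i) := by
  rw [isWeaklyRegular_iff]
  refine ⟨fun h i => ?_, fun h i hi => ?_⟩
  · have hi := h i (by simp)
    rwa [Ideal.ofList_take_ofFn, Ideal.smul_top_eq_self, List.getElem_ofFn] at hi
  · rw [Ideal.ofList_take_ofFn, Ideal.smul_top_eq_self, List.getElem_ofFn]
    exact h ⟨i, by simpa using hi⟩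

theorem IsLocalRing.isSMulRegular_of_perm_append_cons [IsLocalRing R] [IsNoetherianRing R]
    {rs rs₁ rs₂ : List R} {r : R} (h : IsWeaklyRegular R rs) (hperm : rs.Perm (rs₁ ++ r :: rs₂))
    (hmax : ∀ x ∈ rs, x ∈ maximalIdeal R) : IsSMulRegular (R ⧸ Ideal.ofList rs₁) r := by
  have h' := IsLocalRing.isWeaklyRegular_of_perm_of_subset_maximalIdeal h hperm hmax
  rw [isWeaklyRegular_append_iff, isWeaklyRegular_cons_iff, Ideal.smul_top_eq_self] at h'
  exact h'.2.1

theorem List.finRange_perm_toList_append_cons {d : ℕ} {t : Finset (Fin d)} {c : Fin d}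
    (hc : c ∉ t) : (List.finRange d).Perm (t.toList ++ c :: (insert c t)ᶜ.toList) := by
  refine (List.perm_ext_iff_of_nodup (List.nodup_finRange d) ?_).2 fun j => ?_
  · simp only [List.nodup_append, List.nodup_cons, Finset.nodup_toList, Finset.mem_toList,
      List.mem_cons, Finset.mem_compl, Finset.mem_insert]
    grind
  · simp only [List.mem_finRange, List.mem_append, Finset.mem_toList, List.mem_cons,
      Finset.mem_compl, Finset.mem_insert, true_iff]
    tauto

theorem IsLocalRing.isSMulRegular_quotient_span_image [IsLocalRing R] [IsNoetherianRing R]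
    {d : ℕ} {f : Fin d → R} (hreg : IsWeaklyRegular R (List.ofFn f))
    (hmax : ∀ i, f i ∈ maximalIdeal R) {t : Set (Fin d)} {c : Fin d} (hc : c ∉ t) :
    IsSMulRegular (R ⧸ span (f '' t)) (f c) := by
  classical
  have hc' : c ∉ t.toFinset := by simpa using hc
  have key := IsLocalRing.isSMulRegular_of_perm_append_cons (rs₁ := t.toFinset.toList.map f)
    (rs₂ := (insert c t.toFinset)ᶜ.toList.map f) hreg
    (by simpa only [List.ofFn_eq_map, List.map_append, List.map_cons]
      using (List.finRange_perm_toList_append_cons hc').map f)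
    (by simpa [List.ofFn_eq_map] using hmax)
  have hspan : Ideal.ofList (t.toFinset.toList.map f) = span (f '' t) :=
    congrArg span (Set.ext fun r => by simp)
  rwa [hspan] at key

theorem MvPolynomial.isSMulRegular_quotient_map_C {σ : Type*} {I : Ideal R} {z : R}
    (hz : IsSMulRegular (R ⧸ I) z) :
    IsSMulRegular (MvPolynomial σ R ⧸ I.map (C (σ := σ))) (C z : MvPolynomial σ R) := by
  rw [Ideal.isSMulRegular_quotient_iff] at hz ⊢
  intro p hp
  rw [MvPolynomial.mem_map_C_iff] at hp ⊢
  exact fun m => hz _ (by simpa only [MvPolynomial.coeff_C_mul] using hp m)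

theorem Ideal.Quotient.isSMulRegular_quotient_map_mk {K L : Ideal R} {z : R}
    (h : IsSMulRegular (R ⧸ (K ⊔ L)) z) :
    IsSMulRegular ((R ⧸ L) ⧸ K.map (Ideal.Quotient.mk L)) (Ideal.Quotient.mk L z) := by
  rw [Ideal.isSMulRegular_quotient_iff] at h ⊢
  intro y hy
  obtain ⟨p, rfl⟩ := Ideal.Quotient.mk_surjective y
  rw [← map_mul, mem_quotient_iff_mem_sup] at hy
  exact mem_quotient_iff_mem_sup.2 (h p hy)

end Regularity

section ChartRelations

variable {S : Type*} [CommRing S]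

theorem Ideal.span_image_sub_mul_sup_span_singleton {ι : Type*} (s : Set ι) (a x : ι → S)
    (b : S) : span ((fun i => a i - x i * b) '' s) ⊔ span {b} = span (a '' s) ⊔ span {b} := by
  have hb : ∀ (I : Ideal S) (y : S), y * b ∈ I ⊔ span {b} := fun _ y =>
    mem_sup_right (mul_mem_left _ y (mem_span_singleton_self b))
  apply le_antisymm <;> refine sup_le (span_le.2 ?_) le_sup_right <;> rintro _ ⟨i, hi, rfl⟩
  · exact sub_mem (mem_sup_left (subset_span ⟨i, hi, rfl⟩)) (hb _ _)
  · rw [show a i = (a i - x i * b) + x i * b by ring]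
    exact add_mem (mem_sup_left (subset_span ⟨i, hi, rfl⟩)) (hb _ _)

theorem Ideal.isSMulRegular_quotient_sup_span_sub_mul {J : Ideal S} {a b x : S}
    (hb : IsSMulRegular (S ⧸ J) b) (ha : IsSMulRegular (S ⧸ (J ⊔ span {b})) a) :
    IsSMulRegular (S ⧸ (J ⊔ span {a - x * b})) b := by
  rw [Ideal.isSMulRegular_quotient_iff] at hb ha ⊢
  intro p hp
  obtain ⟨j, hj, _, hq, hjq⟩ := Submodule.mem_sup.1 hp
  obtain ⟨q, rfl⟩ := mem_span_singleton'.1 hq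
  have hqa : a * q ∈ J ⊔ span {b} := by
    rw [show a * q = -j + b * (p + x * q) by linear_combination hjq]
    exact add_mem (mem_sup_left (neg_mem hj))
      (mem_sup_right (mul_mem_right _ _ (mem_span_singleton_self b)))
  obtain ⟨j', hj', _, hq', hjq'⟩ := Submodule.mem_sup.1 (ha q hqa)
  obtain ⟨q', rfl⟩ := mem_span_singleton'.1 hq'
  have hp' : p - q' * (a - x * b) ∈ J := by
    refine hb _ ?_
    rw [show b * (p - q' * (a - x * b)) = j + j' * (a - x * b) by
      linear_combination -hjq - (a - x * b) * hjq']
    exact add_mem hj (mul_mem_right _ _ hj')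
  rw [show p = (p - q' * (a - x * b)) + q' * (a - x * b) by ring]
  exact add_mem (mem_sup_left hp') (mem_sup_right (mul_mem_left _ _ (mem_span_singleton_self _)))

theorem Ideal.isSMulRegular_quotient_sup_span_image_sub_mul {ι : Type*} {J : Ideal S} {b : S}
    {a : ι → S} (x : ι → S) (hb : IsSMulRegular (S ⧸ J) b)
    (ha : ∀ (s : Finset ι) (i : ι), i ∉ s →
      IsSMulRegular (S ⧸ (J ⊔ span (a '' s) ⊔ span {b})) (a i))
    (s : Finset ι) : IsSMulRegular (S ⧸ (J ⊔ span ((fun i => a i - x i * b) '' s))) b := by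
  classical
  induction s using Finset.induction_on with
  | empty => rwa [Finset.coe_empty, Set.image_empty, span_empty, sup_bot_eq]
  | insert i s hi ih =>
    rw [Finset.coe_insert, Set.image_insert_eq, span_insert, sup_comm (span {_}), ← sup_assoc]
    refine isSMulRegular_quotient_sup_span_sub_mul ih ?_
    rw [sup_assoc, span_image_sub_mul_sup_span_singleton, ← sup_assoc]
    exact ha s i hi

end ChartRelations

section Chart

variable {R : Type*} [CommRing R] [IsLocalRing R] [IsNoetherianRing R] {d k1 k2 : ℕ}
  {f : Fin d → R} {b : Fin d}

local notation "𝒫" => MvPolynomial (chartIdx d k1 k2 b) R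

theorem isSMulRegular_quotient_sup_span_image_C (hreg : IsWeaklyRegular R (List.ofFn f))
    (hmax : ∀ i, f i ∈ IsLocalRing.maximalIdeal R) (s : Finset (chartIdx d k1 k2 b))
    (a : chartIdx d k1 k2 b) (ha : a ∉ s) :
    IsSMulRegular (𝒫 ⧸ ((span (f '' {j | (j : ℕ) < k1})).map C ⊔
        span ((fun a : chartIdx d k1 k2 b => (C (f a.1) : 𝒫)) '' s) ⊔ span {C (f b)}))
      (C (f a.1) : 𝒫) := by
  have hspan : (span (f '' {j | (j : ℕ) < k1})).map C ⊔
        span ((fun a : chartIdx d k1 k2 b => (C (f a.1) : 𝒫)) '' s) ⊔ span {C (f b)} =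
      (span (f '' ({j | (j : ℕ) < k1} ∪ Subtype.val '' (s : Set (chartIdx d k1 k2 b)) ∪ {b}))).map
        (C : R →+* 𝒫) := by
    simp only [Ideal.map_span, Ideal.map_sup, Set.image_union, Set.image_image,
      Set.image_singleton, span_union]
  rw [hspan]
  refine MvPolynomial.isSMulRegular_quotient_map_C
    (IsLocalRing.isSMulRegular_quotient_span_image hreg hmax ?_)
  simp only [Set.mem_union, Set.mem_ofPred_eq, Set.mem_image, Set.mem_singleton_iff, not_or]
  exact ⟨⟨by omega, fun ⟨a', ha', h⟩ => ha (Subtype.ext h ▸ ha')⟩, a.2.2.2⟩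

theorem isSMulRegular_quotient_map_chartMap (hreg : IsWeaklyRegular R (List.ofFn f))
    (hmax : ∀ i, f i ∈ IsLocalRing.maximalIdeal R) (hb1 : k1 ≤ (b : ℕ)) :
    IsSMulRegular (BlChart R d k1 k2 f b ⧸
        (span (f '' {j | (j : ℕ) < k1})).map (chartMap R d k1 k2 f b))
      (chartMap R d k1 k2 f b (f b)) := by
  have hY : IsSMulRegular (𝒫 ⧸ (span (f '' {j | (j : ℕ) < k1})).map C) (C (f b)) :=
    MvPolynomial.isSMulRegular_quotient_map_C
      (IsLocalRing.isSMulRegular_quotient_span_image hreg hmax (by simpa using hb1))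
  have hrel := isSMulRegular_quotient_sup_span_image_sub_mul X hY
    (isSMulRegular_quotient_sup_span_image_C hreg hmax) Finset.univ
  rw [Finset.coe_univ, Set.image_univ] at hrel
  have := Ideal.Quotient.isSMulRegular_quotient_map_mk hrel
  rwa [Ideal.map_map] at this

end Chart

theorem stmt7_general (R : Type*)
    [CommRing R] [IsLocalRing R] [IsNoetherianRing R]
    (d k1 k2 : ℕ)
    (f : Fin d → R)
    -- `f_1, …, f_d` generate the maximal ideal of `R = 𝒪_{X,p}` …
    (hmax : Ideal.span (Set.range f) = IsLocalRing.maximalIdeal R)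
    -- … and form a regular sequence
    (hreg : ∀ (i : Fin d) (x : R),
        f i * x ∈ Ideal.span (f '' {j : Fin d | (j : ℕ) < (i : ℕ)}) →
        x ∈ Ideal.span (f '' {j : Fin d | (j : ℕ) < (i : ℕ)}))
    -- chart of the blow-up of `I_Z = (f_{k₁+1}, …, f_{k₂})` at `f_b`
    (b : Fin d) (hb1 : k1 ≤ (b : ℕ)) :
    -- the total transform of `I_Y = (f_1, …, f_{k₁})` is saturated at `f_b`,
    -- i.e. it equals the strict transform of `Y`
    ∀ (x : BlChart R d k1 k2 f b) (m : ℕ),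
      chartMap R d k1 k2 f b (f b) ^ m * x ∈
          (Ideal.span (f '' {j : Fin d | (j : ℕ) < k1})).map (chartMap R d k1 k2 f b) →
      x ∈ (Ideal.span (f '' {j : Fin d | (j : ℕ) < k1})).map (chartMap R d k1 k2 f b) := by
  intro x m
  have hweak : IsWeaklyRegular R (List.ofFn f) :=
    (isWeaklyRegular_ofFn_iff f).2 fun i => Ideal.isSMulRegular_quotient_iff.2 (hreg i)
  have hmem : ∀ i, f i ∈ IsLocalRing.maximalIdeal R := fun i => hmax ▸ subset_span ⟨i, rfl⟩
  exact Ideal.isSMulRegular_quotient_iff.1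
    ((isSMulRegular_quotient_map_chartMap hweak hmem hb1).pow m) x

theorem stmt7 (k R : Type*) [Field k] [IsAlgClosed k] [CharZero k]
    [CommRing R] [IsLocalRing R] [IsNoetherianRing R] [Algebra k R]
    (d k1 k2 : ℕ) (h12 : k1 ≤ k2) (h2d : k2 ≤ d)
    (f : Fin d → R)
    -- `f_1, …, f_d` generate the maximal ideal of `R = 𝒪_{X,p}` …
    (hmax : Ideal.span (Set.range f) = IsLocalRing.maximalIdeal R)
    -- … and form a regular sequence
    (hreg : ∀ (i : Fin d) (x : R),
        f i * x ∈ Ideal.span (f '' {j : Fin d | (j : ℕ) < (i : ℕ)}) →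
        x ∈ Ideal.span (f '' {j : Fin d | (j : ℕ) < (i : ℕ)}))
    -- chart of the blow-up of `I_Z = (f_{k₁+1}, …, f_{k₂})` at `f_b`
    (b : Fin d) (hb1 : k1 ≤ (b : ℕ)) (hb2 : (b : ℕ) < k2) :
    -- the total transform of `I_Y = (f_1, …, f_{k₁})` is saturated at `f_b`,
    -- i.e. it equals the strict transform of `Y`
    ∀ (x : BlChart R d k1 k2 f b) (m : ℕ),
      chartMap R d k1 k2 f b (f b) ^ m * x ∈
          (Ideal.span (f '' {j : Fin d | (j : ℕ) < k1})).map (chartMap R d k1 k2 f b) →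
      x ∈ (Ideal.span (f '' {j : Fin d | (j : ℕ) < k1})).map (chartMap R d k1 k2 f b) :=
  stmt7_general R d k1 k2 f hmax hreg b hb1
end

section
/- In the family p : Π_n^+(Δ) → Π_n(Δ) of subdivided simplices, let σ be a cone of Π_n^+(Δ) with image cone μ. For every integral point (u_1,...,u_n) ∈ μ (i.e. all u_i ∈ ℤ^r), every vertex v of the fiber polyhedron p^{-1}(u_1,...,u_n) ∩ σ is an integral point of ℝ^r. In particular, the lattice of σ surjects onto the lattice of μ. -/
/-!
STATEMENT 11 (combinatorial reducedness of `p`, from Proposition 4.9): in the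
family `p : Π_n^+(Δ) → Π_n(Δ)`, let `σ = CnP w` be a cone of `Π_n^+(Δ)` with
image cone `μ`.  For every integral point `(u_1, …, u_n)` of `μ`, every vertex
(extreme point) of the fiber polyhedron `p^{-1}(u) ∩ σ` is an integral point.
In particular, the lattice of `σ` surjects onto the lattice of `μ`.
-/

open scoped BigOperators

/-- `cone(Δ^n)`: tuples of `n` points of `ℝ_{≥0}^r` having equal coordinate
sums (common height). -/
def coneD (n r : ℕ) : Set (Fin n → Fin r → ℝ) :=
  {u | (∀ i j, 0 ≤ u i j) ∧ ∀ i i', ∑ j, u i j = ∑ j, u i' j}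

/-- `cone(Δ × Δ^n)`: `(n+1)`-tuples, the extra point labelled `0 = none`. -/
def coneDP (n r : ℕ) : Set (Option (Fin n) → Fin r → ℝ) :=
  {w | (∀ a j, 0 ≤ w a j) ∧ ∀ a b, ∑ j, w a j = ∑ j, w b j}

/-- Relation prescribed by a side choice. -/
def ordRel : Ordering → ℝ → ℝ → Prop
  | .lt, a, b => a ≤ b
  | .eq, a, b => a = b
  | .gt, a, b => b ≤ a

/-- Non-emptiness of the closed cell of the height-slice simplex determined by
a side choice `ε` relative to the hyperplanes `x_j = u_i^{(j)}`. -/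
def cellNE {n r : ℕ} (u : Fin n → Fin r → ℝ) (ε : Fin n → Fin r → Ordering) : Prop :=
  ∃ x : Fin r → ℝ, (∀ j, 0 ≤ x j) ∧ (∀ i, ∑ j, x j = ∑ j, u i j) ∧
    ∀ i j, ordRel (ε i j) (x j) (u i j)

/-- Two tuples have the same combinatorial type of marked simplex-lattice
subdivision when the corresponding cells are non-empty simultaneously. -/
def typeEquiv {n r : ℕ} (u u' : Fin n → Fin r → ℝ) : Prop :=
  ∀ ε : Fin n → Fin r → Ordering, cellNE u ε ↔ cellNE u' ε

/-- The cone of `Π_n(Δ)` determined by (the combinatorial type of) `u`: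
the closure of its combinatorial-equivalence class. -/
def Cn {n r : ℕ} (u : Fin n → Fin r → ℝ) : Set (Fin n → Fin r → ℝ) :=
  closure {u' | u' ∈ coneD n r ∧ typeEquiv u u'}

/-- The projection `p : cone(Δ × Δ^n) → cone(Δ^n)`. -/
def projP {n r : ℕ} (w : Option (Fin n) → Fin r → ℝ) : Fin n → Fin r → ℝ :=
  fun i => w (some i)

/-- Combinatorial equivalence for `(n+1)`-tuples: same type of the underlying
`n`-tuple, and the extra point `x = w none` compares identically with the
hyperplanes `x_j = u_i^{(j)}` and the boundary `x_j = 0`. -/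
def wEquiv {n r : ℕ} (w w' : Option (Fin n) → Fin r → ℝ) : Prop :=
  typeEquiv (projP w) (projP w') ∧
  (∀ j, w none j = 0 ↔ w' none j = 0) ∧
  ∀ i j, (w none j ≤ w (some i) j ↔ w' none j ≤ w' (some i) j) ∧
         (w (some i) j ≤ w none j ↔ w' (some i) j ≤ w' none j)

/-- The cone of `Π_n^+(Δ)` determined by `w`. -/
def CnP {n r : ℕ} (w : Option (Fin n) → Fin r → ℝ) :
    Set (Option (Fin n) → Fin r → ℝ) :=
  closure {w' | w' ∈ coneDP n r ∧ wEquiv w w'}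

/-!
If the `u_i` are integral, the extra point `x = q none` of a point `q ∈ CnP w` can be moved freely,
at fixed height, inside the open cell `∏ (⌊x_j⌋, ⌈x_j⌉)` of its non-integral coordinates: near `q`
such a move does not change how `x` compares with `0` and the integers `u_i^{(j)}`, so it preserves
the combinatorial class, hence its closure `CnP w`. If some `x_j` is not an integer, the integral
height `∑ x = ∑ u_i` (for `n ≠ 0`) forces a second non-integral coordinate `x_k`, and shifting mass
between `x_j` and `x_k` in either direction shows that `q` is not extreme. For `n ≠ 0` the fiber is
compact, so by Krein–Milman it has an extreme point, which is integral; for `n = 0` rounding `x`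
down stays in the closed cell.
-/

open Filter Topology Function

lemma floor_lt_and_lt_ceil_of_not_isInt {a : ℝ} (h : ¬∃ z : ℤ, a = z) :
    (⌊a⌋ : ℝ) < a ∧ a < ⌈a⌉ :=
  ⟨(Int.floor_le a).lt_of_ne fun he => h ⟨_, he.symm⟩, (Int.le_ceil a).lt_of_ne fun he => h ⟨_, he⟩⟩

lemma not_isInt_of_ne_of_mem_Icc {a b : ℝ} (h₁ : (⌊a⌋ : ℝ) ≤ b) (h₂ : b ≤ ⌈a⌉) (hne : b ≠ a) :
    ¬∃ z : ℤ, a = z := by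
  rintro ⟨z, rfl⟩
  simp only [Int.floor_intCast, Int.ceil_intCast] at h₁ h₂
  exact hne (le_antisymm h₂ h₁)

lemma same_side_of_floor_lt_of_lt_ceil {a b : ℝ} (h₁ : ⌊a⌋ < b) (h₂ : b < ⌈a⌉) (z : ℤ) :
    (a < z ∧ b < z) ∨ (z < a ∧ z < b) := by
  have hfc : ⌊a⌋ < ⌈a⌉ := by exact_mod_cast h₁.trans h₂
  rcases le_or_gt z ⌊a⌋ with hz | hz
  · refine Or.inr ⟨lt_of_not_ge fun ha => ?_, lt_of_le_of_lt (by exact_mod_cast hz) h₁⟩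
    have := Int.ceil_le.2 ha
    omega
  · have hz' : (⌊a⌋ : ℝ) + 1 ≤ z := by exact_mod_cast hz
    have hb : b < (⌊a⌋ : ℝ) + 1 := h₂.trans_le (by exact_mod_cast Int.ceil_le_floor_add_one a)
    exact Or.inl ⟨(Int.lt_floor_add_one a).trans_le hz', hb.trans_le hz'⟩

lemma le_iff_and_ge_iff_of_same_side {a b c : ℝ} (h : (a < c ∧ b < c) ∨ (c < a ∧ c < b)) :
    (a ≤ c ↔ b ≤ c) ∧ (c ≤ a ↔ c ≤ b) := by
  rcases h with ⟨ha, hb⟩ | ⟨ha, hb⟩ <;> simp [ha.le, hb.le, ha.not_ge, hb.not_ge]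

lemma eq_zero_of_mem_extremePoints {𝕜 E : Type*} [Field 𝕜] [LinearOrder 𝕜] [IsStrictOrderedRing 𝕜]
    [AddCommGroup E] [Module 𝕜 E] {A : Set E} {x v : E} (hx : x ∈ Set.extremePoints 𝕜 A)
    (hadd : x + v ∈ A) (hsub : x - v ∈ A) : v = 0 := by
  have hseg : x ∈ openSegment 𝕜 (x - v) (x + v) :=
    ⟨1 / 2, 1 / 2, by norm_num, by norm_num, by norm_num, by module⟩
  simpa using ((mem_extremePoints.1 hx).2 _ hsub _ hadd hseg).1

lemma exists_ne_not_isInt {ι : Type*} [Fintype ι] [DecidableEq ι] {s : ι → ℝ}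
    (hs : ∃ z : ℤ, ∑ l, s l = z) {j : ι} (hj : ¬∃ z : ℤ, s j = z) :
    ∃ k ≠ j, ¬∃ z : ℤ, s k = z := by
  by_contra! h
  set L := (Int.castAddHom ℝ).range
  have hL : ∀ {a : ℝ}, (∃ z : ℤ, a = z) → a ∈ L := fun ⟨z, hz⟩ => ⟨z, by simp [hz]⟩
  obtain ⟨z, hz⟩ : s j ∈ L := by
    rw [← add_sub_cancel_right (s j) (∑ l ∈ Finset.univ.erase j, s l),
      Finset.add_sum_erase _ _ (Finset.mem_univ j)]
    exact L.sub_mem (hL hs) (L.sum_mem fun k hk => hL (h k (Finset.ne_of_mem_erase hk)))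
  exact hj ⟨z, by simpa using hz.symm⟩

section

variable {n r : ℕ}

lemma isClosed_coneDP : IsClosed (coneDP n r) := by
  simp only [coneDP, Set.ofPred_and, Set.ofPred_forall]
  exact (isClosed_iInter fun a => isClosed_iInter fun j =>
      isClosed_le (by fun_prop) (by fun_prop)).inter
    (isClosed_iInter fun a => isClosed_iInter fun b => isClosed_eq (by fun_prop) (by fun_prop))

lemma CnP_subset_coneDP (w : Option (Fin n) → Fin r → ℝ) : CnP w ⊆ coneDP n r :=
  closure_minimal (fun _ h => h.1) isClosed_coneDP

lemma continuous_projP : Continuous (projP : (Option (Fin n) → Fin r → ℝ) → _) :=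
  continuous_pi fun i => continuous_apply (some i)

lemma projP_update_none (q : Option (Fin n) → Fin r → ℝ) (x : Fin r → ℝ) :
    projP (update q none x) = projP q :=
  funext fun _ => update_of_ne (Option.some_ne_none _) _ _

lemma update_none_mem_coneDP {q : Option (Fin n) → Fin r → ℝ} (hq : q ∈ coneDP n r)
    {x : Fin r → ℝ} (hx : ∀ j, 0 ≤ x j) (hsum : ∀ i, ∑ j, x j = ∑ j, q (some i) j) :
    update q none x ∈ coneDP n r := by
  refine ⟨fun a j => ?_, fun a b => ?_⟩
  · cases a <;> simp [hx, hq.1]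
  · cases a <;> cases b <;> simp only [update_self, update_of_ne (Option.some_ne_none _)]
    exacts [hsum _, (hsum _).symm, hq.2 _ _]

lemma typeEquiv_refl (u : Fin n → Fin r → ℝ) : typeEquiv u u :=
  fun _ => Iff.rfl

lemma wEquiv.trans {w w' w'' : Option (Fin n) → Fin r → ℝ} (h : wEquiv w w')
    (h' : wEquiv w' w'') : wEquiv w w'' :=
  ⟨fun ε => (h.1 ε).trans (h'.1 ε), fun j => (h.2.1 j).trans (h'.2.1 j),
    fun i j => ⟨(h.2.2 i j).1.trans (h'.2.2 i j).1, (h.2.2 i j).2.trans (h'.2.2 i j).2⟩⟩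

lemma wEquiv_update_none {w : Option (Fin n) → Fin r → ℝ} {y : Fin r → ℝ}
    (h0 : ∀ j, w none j = 0 ↔ y j = 0)
    (hle : ∀ i j, (w none j ≤ w (some i) j ↔ y j ≤ w (some i) j) ∧
      (w (some i) j ≤ w none j ↔ w (some i) j ≤ y j)) :
    wEquiv w (update w none y) := by
  refine ⟨typeEquiv_refl _, fun j => ?_, fun i j => ?_⟩ <;>
    simp only [update_self, update_of_ne (Option.some_ne_none _)]
  exacts [h0 j, hle i j]

theorem update_none_mem_CnP {w q : Option (Fin n) → Fin r → ℝ} (hq : q ∈ CnP w)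
    (hqint : ∀ i j, ∃ z : ℤ, q (some i) j = z) {x : Fin r → ℝ}
    (hsum : ∀ i, ∑ j, x j = ∑ j, q (some i) j)
    (hx : ∀ j, x j ≠ q none j → (⌊q none j⌋ : ℝ) < x j ∧ x j < ⌈q none j⌉) :
    update q none x ∈ CnP w := by
  set C := {w' | w' ∈ coneDP n r ∧ wEquiv w w'}
  set δ := x - q none
  set φ : (Option (Fin n) → Fin r → ℝ) → Option (Fin n) → Fin r → ℝ :=
    fun w' => update w' none (w' none + δ)
  have hqC : q ∈ coneDP n r := CnP_subset_coneDP w hq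
  have hφq : φ q = update q none x := by simp [φ, δ]
  have hφ : Continuous φ := continuous_id.update none (by fun_prop)
  have hnear : ∀ᶠ w' in 𝓝 q, ∀ j, δ j ≠ 0 →
      ((0 < w' none j ∧ 0 < w' none j + δ j) ∧
        ∀ i, (w' none j < w' (some i) j ∧ w' none j + δ j < w' (some i) j) ∨
          (w' (some i) j < w' none j ∧ w' (some i) j < w' none j + δ j)) := by
    refine eventually_all.2 fun j => ?_
    by_cases hj : δ j = 0
    · exact Eventually.of_forall fun _ h => absurd hj h
    obtain ⟨h₁, h₂⟩ := hx j (sub_ne_zero.1 hj)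
    have hside := same_side_of_floor_lt_of_lt_ceil h₁ h₂
    have hcont : ∀ a, ContinuousAt (fun w' : Option (Fin n) → Fin r → ℝ => w' a j) q :=
      fun a => ((continuous_apply j).comp (continuous_apply a)).continuousAt
    have hδcont : ContinuousAt (fun w' : Option (Fin n) → Fin r → ℝ => w' none j + δ j) q :=
      (hcont none).add continuousAt_const
    have hqδ : q none j + δ j = x j := by simp [δ]
    have hpos : 0 < q none j ∧ 0 < x j := by
      simpa [(hqC.1 none j).not_gt] using hside 0
    refine (((continuousAt_const.eventually_lt (hcont none) hpos.1).and
      (continuousAt_const.eventually_lt hδcont (hqδ ▸ hpos.2))).and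
      (eventually_all.2 fun i => ?_)).mono fun _ h _ => h
    obtain ⟨z, hz⟩ := hqint i j
    rcases hside z with ⟨ha, hb⟩ | ⟨ha, hb⟩ <;> rw [← hz] at ha hb
    · exact ((hcont none).eventually_lt (hcont (some i)) ha).and
        (hδcont.eventually_lt (hcont (some i)) (hqδ ▸ hb)) |>.mono fun _ => Or.inl
    · exact ((hcont (some i)).eventually_lt (hcont none) ha).and
        ((hcont (some i)).eventually_lt hδcont (hqδ ▸ hb)) |>.mono fun _ => Or.inr
  have hmaps : ∀ᶠ w' in 𝓝[C] q, φ w' ∈ C := by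
    filter_upwards [nhdsWithin_le_nhds hnear, self_mem_nhdsWithin] with w' hw' ⟨hw'D, hw'E⟩
    refine ⟨update_none_mem_coneDP hw'D (fun j => ?_) (fun i => ?_),
      hw'E.trans (wEquiv_update_none (fun j => ?_) (fun i j => ?_))⟩ <;>
      simp only [Pi.add_apply]
    · by_cases hj : δ j = 0
      · simpa [hj] using hw'D.1 none j
      · exact (hw' j hj).1.2.le
    · simp [δ, Finset.sum_add_distrib, Finset.sum_sub_distrib, hsum i, hqC.2 none (some i),
        hw'D.2 none (some i)]
    · by_cases hj : δ j = 0
      · simp [hj]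
      · exact iff_of_false (hw' j hj).1.1.ne' (hw' j hj).1.2.ne'
    · by_cases hj : δ j = 0
      · simp [hj]
      · exact le_iff_and_ge_iff_of_same_side ((hw' j hj).2 i)
  have := mem_closure_iff_nhdsWithin_neBot.1 hq
  exact hφq ▸ mem_closure_of_tendsto hφ.continuousWithinAt.tendsto hmaps

theorem update_none_mem_CnP_of_le {w q : Option (Fin n) → Fin r → ℝ} (hq : q ∈ CnP w)
    (hqint : ∀ i j, ∃ z : ℤ, q (some i) j = z) {x : Fin r → ℝ}
    (hsum : ∀ i, ∑ j, x j = ∑ j, q (some i) j)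
    (hx : ∀ j, x j ≠ q none j → (⌊q none j⌋ : ℝ) ≤ x j ∧ x j ≤ ⌈q none j⌉) :
    update q none x ∈ CnP w := by
  set S := {c : ℝ | update q none (AffineMap.lineMap x (q none) c) ∈ CnP w}
  have hS : IsClosed S :=
    isClosed_closure.preimage (continuous_const.update none AffineMap.lineMap_continuous)
  have hIoc : Set.Ioc (0 : ℝ) 1 ⊆ S := by
    rintro c ⟨hc₀, hc₁⟩
    refine update_none_mem_CnP hq hqint (fun i => ?_) (fun j hj => ?_) <;>
      simp only [AffineMap.lineMap_apply_module, Pi.add_apply, Pi.smul_apply, smul_eq_mul] at *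
    · rw [Finset.sum_add_distrib, ← Finset.mul_sum, ← Finset.mul_sum, hsum i,
        (CnP_subset_coneDP w hq).2 none (some i)]
      ring
    · have hxj : x j ≠ q none j := fun h => hj (by rw [h]; ring)
      obtain ⟨hlo, hhi⟩ := hx j hxj
      obtain ⟨hflo, hchi⟩ :=
        floor_lt_and_lt_ceil_of_not_isInt (not_isInt_of_ne_of_mem_Icc hlo hhi hxj)
      constructor <;> nlinarith
  have h0 : (0 : ℝ) ∈ S :=
    hS.closure_subset_iff.2 hIoc (by rw [closure_Ioc zero_ne_one]; exact ⟨le_rfl, zero_le_one⟩)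
  simpa [S] using h0

theorem eventually_add_smul_single_none_mem_CnP {w q : Option (Fin n) → Fin r → ℝ}
    (hq : q ∈ CnP w) (hqint : ∀ i j, ∃ z : ℤ, q (some i) j = z) {d : Fin r → ℝ}
    (hd : n ≠ 0 → ∑ j, d j = 0) (hdq : ∀ j, d j ≠ 0 → ¬∃ z : ℤ, q none j = z) :
    ∀ᶠ t in 𝓝 (0 : ℝ), q + t • (Pi.single none d : Option (Fin n) → Fin r → ℝ) ∈ CnP w := by
  have hupdate : ∀ t : ℝ, q + t • (Pi.single none d : Option (Fin n) → Fin r → ℝ) =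
      update q none (q none + t • d) := by
    intro t; ext (_ | i) j <;> simp
  have hcell : ∀ᶠ t in 𝓝 (0 : ℝ), ∀ j, q none j + t * d j ≠ q none j →
      (⌊q none j⌋ : ℝ) < q none j + t * d j ∧ q none j + t * d j < ⌈q none j⌉ := by
    refine eventually_all.2 fun j => ?_
    by_cases hj : d j = 0
    · exact Eventually.of_forall fun t h => absurd (by simp [hj]) h
    have hlim : Tendsto (fun t : ℝ => q none j + t * d j) (𝓝 0) (𝓝 (q none j)) := by
      simpa using ((continuous_mul_const (d j)).const_add (q none j)).tendsto 0
    exact (hlim.eventually (Ioo_mem_nhds (floor_lt_and_lt_ceil_of_not_isInt (hdq j hj)).1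
      (floor_lt_and_lt_ceil_of_not_isInt (hdq j hj)).2)).mono fun _ h _ => h
  refine hcell.mono fun t ht => hupdate t ▸ update_none_mem_CnP hq hqint (fun i => ?_) ht
  simp [Finset.sum_add_distrib, ← Finset.mul_sum, hd (Fin.pos i).ne',
    (CnP_subset_coneDP w hq).2 none (some i)]

lemma exists_direction_of_not_isInt {q : Option (Fin n) → Fin r → ℝ} (hq : q ∈ coneDP n r)
    (hqint : ∀ i j, ∃ z : ℤ, q (some i) j = z) {j : Fin r} (hj : ¬∃ z : ℤ, q none j = z) :
    ∃ d : Fin r → ℝ, d j ≠ 0 ∧ (n ≠ 0 → ∑ l, d l = 0) ∧ ∀ l, d l ≠ 0 → ¬∃ z : ℤ, q none l = z := by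
  rcases eq_or_ne n 0 with hn | hn
  · refine ⟨Pi.single j 1, by simp, fun h => absurd hn h, fun l hl => ?_⟩
    obtain rfl : l = j := by by_contra h; simp [h] at hl
    exact hj
  · set i₀ : Fin n := ⟨0, Nat.pos_of_ne_zero hn⟩
    have hsum : ∃ z : ℤ, ∑ l, q none l = z := by
      choose z hz using hqint i₀
      exact ⟨∑ l, z l, by simp [hq.2 none (some i₀), hz]⟩
    obtain ⟨k, hkj, hk⟩ := exists_ne_not_isInt hsum hj
    refine ⟨Pi.single j 1 - Pi.single k 1, by simp [hkj.symm], fun _ => by simp, fun l hl => ?_⟩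
    by_cases hlj : l = j
    · exact hlj ▸ hj
    · obtain rfl : l = k := by by_contra h; simp [hlj, h] at hl
      exact hk

theorem exists_int_of_mem_extremePoints_fiber {w q : Option (Fin n) → Fin r → ℝ}
    {u : Fin n → Fin r → ℝ} (hint : ∀ i j, ∃ z : ℤ, u i j = z)
    (hq : q ∈ Set.extremePoints ℝ (CnP w ∩ projP ⁻¹' {u})) (a : Option (Fin n)) (j : Fin r) :
    ∃ z : ℤ, q a j = z := by
  obtain ⟨hqC, hqu : projP q = u⟩ := hq.1
  have hqint : ∀ i j, ∃ z : ℤ, q (some i) j = z := by rw [← hqu] at hint; exact hint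
  obtain _ | i := a
  · by_contra hj
    obtain ⟨d, hdj, hd, hdq⟩ := exists_direction_of_not_isInt (CnP_subset_coneDP w hqC) hqint hj
    have hplus := eventually_add_smul_single_none_mem_CnP hqC hqint hd hdq
    have hminus := (continuous_neg.tendsto' (0 : ℝ) 0 neg_zero).eventually hplus
    obtain ⟨t, ⟨hpos, hneg⟩, ht⟩ :=
      ((eventually_nhdsWithin_of_eventually_nhds (s := {0}ᶜ) (hplus.and hminus)).and
        self_mem_nhdsWithin).exists
    have hproj : ∀ s : ℝ, projP (q + s • (Pi.single none d : Option (Fin n) → Fin r → ℝ)) = u := by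
      intro s; ext i l; simp [projP, ← hqu]
    have h0 := eq_zero_of_mem_extremePoints hq ⟨hpos, hproj t⟩
      (by rw [sub_eq_add_neg, ← neg_smul]; exact ⟨hneg, hproj (-t)⟩)
    simpa [hdj, show t ≠ 0 from ht] using congr_fun (congr_fun h0 none) j
  · exact hqint i j

lemma isCompact_CnP_inter_fiber (hn : n ≠ 0) (w : Option (Fin n) → Fin r → ℝ)
    (u : Fin n → Fin r → ℝ) : IsCompact (CnP w ∩ projP ⁻¹' {u}) := by
  set i₀ : Fin n := ⟨0, Nat.pos_of_ne_zero hn⟩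
  refine (isCompact_Icc (a := 0) (b := fun _ _ => ∑ l, u i₀ l)).of_isClosed_subset
    (isClosed_closure.inter (isClosed_singleton.preimage continuous_projP)) ?_
  rintro q ⟨hqC, hqu : projP q = u⟩
  have hq := CnP_subset_coneDP w hqC
  refine ⟨fun a j => hq.1 a j, fun a j => ?_⟩
  calc q a j ≤ ∑ l, q a l := Finset.single_le_sum (fun l _ => hq.1 a l) (Finset.mem_univ j)
    _ = ∑ l, u i₀ l := by rw [hq.2 a (some i₀), ← hqu]; rfl

theorem exists_int_mem_fiber {w : Option (Fin n) → Fin r → ℝ} {u : Fin n → Fin r → ℝ}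
    (hint : ∀ i j, ∃ z : ℤ, u i j = z) (hu : u ∈ projP '' CnP w) :
    ∃ q ∈ CnP w, projP q = u ∧ ∀ a j, ∃ z : ℤ, q a j = z := by
  rcases eq_or_ne n 0 with rfl | hn
  · obtain ⟨q, hq, rfl⟩ := hu
    refine ⟨update q none fun j => ⌊q none j⌋,
      update_none_mem_CnP_of_le hq (fun i => i.elim0) (fun i => i.elim0)
        (fun j _ => ⟨le_rfl, by exact_mod_cast Int.floor_le_ceil _⟩),
      projP_update_none _ _, ?_⟩
    rintro (_ | i) j
    exacts [⟨⌊q none j⌋, by simp⟩, i.elim0]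
  · obtain ⟨q, hq⟩ := (isCompact_CnP_inter_fiber hn w u).extremePoints_nonempty
      hu
    exact ⟨q, hq.1.1, hq.1.2, exists_int_of_mem_extremePoints_fiber hint hq⟩

end

theorem stmt11_general (n r : ℕ) (w : Option (Fin n) → Fin r → ℝ)
    (u : Fin n → Fin r → ℝ) (hu : u ∈ projP '' CnP w)
    (hint : ∀ i j, ∃ z : ℤ, u i j = (z : ℝ)) :
    (∀ q ∈ Set.extremePoints ℝ (CnP w ∩ projP ⁻¹' {u}),
        ∀ (a : Option (Fin n)) (j : Fin r), ∃ z : ℤ, q a j = (z : ℝ)) ∧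
    (∃ q ∈ CnP w, projP q = u ∧
        ∀ (a : Option (Fin n)) (j : Fin r), ∃ z : ℤ, q a j = (z : ℝ)) :=
  ⟨fun _ hq => exists_int_of_mem_extremePoints_fiber hint hq, exists_int_mem_fiber hint hu⟩

theorem stmt11 (n r : ℕ) (w : Option (Fin n) → Fin r → ℝ) (hw : w ∈ coneDP n r)
    (u : Fin n → Fin r → ℝ) (hu : u ∈ projP '' CnP w)
    (hint : ∀ i j, ∃ z : ℤ, u i j = (z : ℝ)) :
    (∀ q ∈ Set.extremePoints ℝ (CnP w ∩ projP ⁻¹' {u}),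
        ∀ (a : Option (Fin n)) (j : Fin r), ∃ z : ℤ, q a j = (z : ℝ)) ∧
    (∃ q ∈ CnP w, projP q = u ∧
        ∀ (a : Option (Fin n)) (j : Fin r), ∃ z : ℤ, q a j = (z : ℝ)) :=
  stmt11_general n r w u hu hint
end

section
/- Fix a fan Π_n(Δ) subdividing cone(Δ^n) with finitely many cones, and for each cone τ let h_τ ∈ ℕ be the minimum positive value of the height function h on integral points of τ (when it exists). Let h_tot be the least common multiple of the h_τ. Then after replacing the lattice ℤ of the target ray ℝ_{≥0} by h_tot·ℤ and the lattice of Π_n(Δ) by the kernel sublattice {(u_i) : ∑_j u_i^{(j)} ≡ 0 mod h_tot for all i}, the height map h : Π_n(Δ) → ℝ_{≥0} becomes combinatorially reduced: for every cone τ, the image of the lattice points of τ equals the lattice h_tot·ℤ_{≥0} of the image. -/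
/-!
STATEMENT 13 (making the height map combinatorially reduced, from
Proposition 4.9): let `h_τ` be the minimum positive height of integral points
of a cone `τ` of `Π_n(Δ)` and let `h_tot` be the least common multiple of the
`h_τ` (encoded by the hypothesis that each `h_τ` exists and divides `h_tot`).
After replacing the lattice of the base ray by `h_tot·ℤ` and the lattice of
`Π_n(Δ)` by the sublattice of integral tuples whose heights are divisible by
`h_tot`, the height map becomes combinatorially reduced: for every cone `τ`,
the set of heights of sublattice points of `τ` is exactly `h_tot·ℤ_{≥0}`.
-/

open scoped BigOperators

/-- Integral tuples. -/
def latticePt {n r : ℕ} (u : Fin n → Fin r → ℝ) : Prop :=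
  ∀ i j, ∃ z : ℤ, u i j = (z : ℝ)

/-! Every cone `Cn u` is stable under scaling by nonnegative reals, since the cell structure
of a simplex-lattice subdivision is scale invariant. Scaling an integral point of height `h_τ`
by `(h_tot / h_τ) * m` therefore reaches every height `h_tot * m`, and heights are nonnegative. -/

lemma isClosed_coneD (n r : ℕ) : IsClosed (coneD n r) := by
  simp only [coneD, Set.ofPred_and, Set.ofPred_forall]
  exact (isClosed_iInter fun i => isClosed_iInter fun j =>
      isClosed_le continuous_const (by fun_prop)).inter
    (isClosed_iInter fun i => isClosed_iInter fun i' => isClosed_eq (by fun_prop) (by fun_prop))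

lemma smul_mem_coneD {n r : ℕ} {v : Fin n → Fin r → ℝ} (hv : v ∈ coneD n r) {c : ℝ}
    (hc : 0 ≤ c) : c • v ∈ coneD n r := by
  refine ⟨fun i j => mul_nonneg hc (hv.1 i j), fun i i' => ?_⟩
  simp only [Pi.smul_apply, smul_eq_mul, ← Finset.mul_sum, hv.2 i i']

lemma cellNE.smul {n r : ℕ} {u : Fin n → Fin r → ℝ} {ε : Fin n → Fin r → Ordering}
    (h : cellNE u ε) {c : ℝ} (hc : 0 < c) : cellNE (c • u) ε := by
  obtain ⟨x, hx_nonneg, hx_sum, hx_rel⟩ := h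
  refine ⟨c • x, fun j => mul_nonneg hc.le (hx_nonneg j), fun i => ?_, fun i j => ?_⟩
  · simp only [Pi.smul_apply, smul_eq_mul, ← Finset.mul_sum, hx_sum i]
  · have hrel := hx_rel i j
    simp only [Pi.smul_apply, smul_eq_mul]
    generalize ε i j = e at hrel
    cases e <;> simp only [ordRel] at hrel ⊢
    · exact mul_le_mul_of_nonneg_left hrel hc.le
    · rw [hrel]
    · exact mul_le_mul_of_nonneg_left hrel hc.le

lemma cellNE_smul_iff {n r : ℕ} {u : Fin n → Fin r → ℝ} {ε : Fin n → Fin r → Ordering}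
    {c : ℝ} (hc : 0 < c) : cellNE (c • u) ε ↔ cellNE u ε := by
  refine ⟨fun h => ?_, fun h => h.smul hc⟩
  simpa [smul_smul, inv_mul_cancel₀ hc.ne'] using h.smul (inv_pos.mpr hc)

lemma smul_mem_setOf_typeEquiv {n r : ℕ} {u v : Fin n → Fin r → ℝ}
    (hv : v ∈ {u' | u' ∈ coneD n r ∧ typeEquiv u u'}) {c : ℝ} (hc : 0 < c) :
    c • v ∈ {u' | u' ∈ coneD n r ∧ typeEquiv u u'} :=
  ⟨smul_mem_coneD hv.1 hc.le, fun ε => (hv.2 ε).trans (cellNE_smul_iff hc).symm⟩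

lemma Cn_subset_coneD {n r : ℕ} (u : Fin n → Fin r → ℝ) : Cn u ⊆ coneD n r :=
  closure_minimal (fun _ hw => hw.1) (isClosed_coneD n r)

section PositiveCone

variable {E : Type*} [TopologicalSpace E] [AddCommGroup E] [Module ℝ E] [ContinuousSMul ℝ E]
  {s : Set E}

lemma zero_mem_closure_of_smul_mem (hs : ∀ c : ℝ, 0 < c → ∀ x ∈ s, c • x ∈ s) {x : E}
    (hx : x ∈ s) : (0 : E) ∈ closure s := by
  have hlim : Filter.Tendsto (fun c : ℝ => c • x) (nhdsWithin 0 (Set.Ioi 0)) (nhds 0) := by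
    have h0 : Filter.Tendsto (fun c : ℝ => c • x) (nhds 0) (nhds ((0 : ℝ) • x)) :=
      (continuous_id.smul continuous_const).tendsto 0
    simpa using h0.mono_left nhdsWithin_le_nhds
  refine mem_closure_of_tendsto hlim ?_
  filter_upwards [self_mem_nhdsWithin] with c hc using hs c hc x hx

lemma smul_mem_closure_of_smul_mem (hs : ∀ c : ℝ, 0 < c → ∀ x ∈ s, c • x ∈ s)
    (hne : s.Nonempty) {c : ℝ} (hc : 0 ≤ c) {x : E} (hx : x ∈ closure s) :
    c • x ∈ closure s := by
  rcases hc.eq_or_lt with rfl | hc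
  · simpa using zero_mem_closure_of_smul_mem hs hne.some_mem
  · exact map_mem_closure (continuous_const_smul c) hx fun y hy => hs c hc y hy

end PositiveCone

lemma smul_mem_Cn {n r : ℕ} {u v : Fin n → Fin r → ℝ} (hu : u ∈ coneD n r) {c : ℝ}
    (hc : 0 ≤ c) (hv : v ∈ Cn u) : c • v ∈ Cn u :=
  smul_mem_closure_of_smul_mem (fun _ hc _ hw => smul_mem_setOf_typeEquiv hw hc)
    ⟨u, hu, fun _ => Iff.rfl⟩ hc hv

lemma latticePt.nat_smul {n r : ℕ} {v : Fin n → Fin r → ℝ} (hv : latticePt v) (k : ℕ) :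
    latticePt ((k : ℝ) • v) := fun i j => by
  obtain ⟨z, hz⟩ := hv i j
  exact ⟨k * z, by simp [hz]⟩

lemma exists_nat_eq_mul_of_nonneg {a : ℕ} {z : ℤ} (h : 0 ≤ (a : ℝ) * z) :
    ∃ m : ℕ, (a : ℝ) * z = a * m := by
  obtain ⟨m, rfl | rfl⟩ := Int.eq_nat_or_neg z
  · exact ⟨m, by push_cast; ring⟩
  · refine ⟨m, ?_⟩
    have : (0 : ℝ) ≤ a * m := by positivity
    push_cast at h ⊢
    nlinarith

theorem stmt13_general (n r : ℕ) (h_tot : ℕ)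
    -- each cone τ = `Cn u` has a minimum positive height `h_τ` of integral
    -- points, and `h_τ ∣ h_tot`
    (hdvd : ∀ u ∈ coneD n r, u ≠ 0 →
      ∃ hτ : ℕ, hτ ∣ h_tot ∧
        IsLeast {t : ℕ | 0 < t ∧
          ∃ v ∈ Cn u, latticePt v ∧ ∀ i, ∑ j, v i j = (t : ℝ)} hτ) :
    -- conclusion: the image under the height map of the sublattice points of
    -- each cone equals `h_tot · ℤ_{≥0}`, the lattice of the image ray
    ∀ u ∈ coneD n r, u ≠ 0 →
      {t : ℝ | ∃ v ∈ Cn u, latticePt v ∧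
          (∀ i, ∃ z : ℤ, ∑ j, v i j = (h_tot : ℝ) * z) ∧
          ∀ i, ∑ j, v i j = t}
        = {t : ℝ | ∃ m : ℕ, t = (h_tot : ℝ) * m} := by
  intro u hu hu0
  obtain ⟨i₀⟩ : Nonempty (Fin n) := by
    by_contra hn
    exact hu0 (funext fun i => (hn ⟨i⟩).elim)
  ext t
  constructor
  · rintro ⟨v, hv, -, hdiv, hheight⟩
    obtain ⟨z, hz⟩ := hdiv i₀
    rw [← hheight i₀, hz]
    refine exists_nat_eq_mul_of_nonneg ?_
    rw [← hz]
    exact Finset.sum_nonneg fun j _ => (Cn_subset_coneD u hv).1 i₀ j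
  · rintro ⟨m, rfl⟩
    obtain ⟨hτ, ⟨q, rfl⟩, ⟨-, v, hv, hv_lattice, hv_height⟩, -⟩ := hdvd u hu hu0
    have height_smul : ∀ i, ∑ j, ((q * m : ℕ) : ℝ) • v i j = (hτ * q : ℕ) * m := fun i => by
      rw [← Finset.smul_sum, hv_height i]; push_cast; ring
    exact ⟨((q * m : ℕ) : ℝ) • v, smul_mem_Cn hu (by positivity) hv, hv_lattice.nat_smul _,
      fun i => ⟨m, height_smul i⟩, height_smul⟩

theorem stmt13 (n r : ℕ) (h_tot : ℕ) (hpos : 0 < h_tot)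
    -- each cone τ = `Cn u` has a minimum positive height `h_τ` of integral
    -- points, and `h_τ ∣ h_tot`
    (hdvd : ∀ u ∈ coneD n r, u ≠ 0 →
      ∃ hτ : ℕ, hτ ∣ h_tot ∧
        IsLeast {t : ℕ | 0 < t ∧
          ∃ v ∈ Cn u, latticePt v ∧ ∀ i, ∑ j, v i j = (t : ℝ)} hτ) :
    -- conclusion: the image under the height map of the sublattice points of
    -- each cone equals `h_tot · ℤ_{≥0}`, the lattice of the image ray
    ∀ u ∈ coneD n r, u ≠ 0 →
      {t : ℝ | ∃ v ∈ Cn u, latticePt v ∧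
          (∀ i, ∃ z : ℤ, ∑ j, v i j = (h_tot : ℝ) * z) ∧
          ∀ i, ∑ j, v i j = t}
        = {t : ℝ | ∃ m : ℕ, t = (h_tot : ℝ) * m} :=
  stmt13_general n r h_tot hdvd
end

section
/- Let 𝖦_τ be the combinatorial fiber polyhedral complex of the family Π_n^+(Δ) → Π_n(Δ) over the relative interior of a cone cone(τ) having the ray cone(ρ) as a face. Then there is a well-defined retraction ψ : 𝖦_τ^0 → 𝖦_ρ^0 on 0-skeletons: for each marked vertex u_j, the image of the section σ_j over cone(τ) is a cone mapping isomorphically onto cone(τ), and it contains a unique ray over cone(ρ), which determines a unique vertex ψ(u_j) ∈ 𝖦_ρ^0. Moreover, for each vertex v of 𝒮_ρ, the set of labels of marked vertices in ψ^{-1}(v) equals I_v = m^{-1}(v). -/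
open scoped BigOperators

/-- The section `σ_i : cone(Δ^n) → cone(Δ × Δ^n)`. -/
def secD {n r : ℕ} (i : Fin n) (u : Fin n → Fin r → ℝ) :
    Option (Fin n) → Fin r → ℝ :=
  fun a => a.elim (u i) u


/-
Everything but the first claim holds because `projP` is a left inverse of `secD i`. For the first,
pick `u₀` in the class of `u` whose `i`-th point has the fewest zero coordinates. The members of the
class with the same zeros in the `i`-th point are mapped by `secD i` onto the `wEquiv`-class of
`secD i u₀`, and they are dense in the class of `u`: for `v` in the class and small `t > 0`,
`v + t • u₀` has exactly those zeros, a cell non-empty for `v` and `u₀` stays non-empty by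
convexity, and a cell empty for `v` stays empty by compactness. As `secD i` is a closed embedding,
taking closures gives `secD i '' Cn u = CnP (secD i u₀)`.
-/

open Filter Topology

section

variable {n r : ℕ}

lemma isClosed_setOf_ordRel {X : Type*} [TopologicalSpace X] (o : Ordering) {f g : X → ℝ}
    (hf : Continuous f) (hg : Continuous g) : IsClosed {p | ordRel o (f p) (g p)} := by
  cases o
  exacts [isClosed_le hf hg, isClosed_eq hf hg, isClosed_le hg hf]

def cell (u : Fin n → Fin r → ℝ) (ε : Fin n → Fin r → Ordering) : Set (Fin r → ℝ) :=
  {x | (∀ j, 0 ≤ x j) ∧ (∀ i, ∑ j, x j = ∑ j, u i j) ∧ ∀ i j, ordRel (ε i j) (x j) (u i j)}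

lemma isClosed_setOf_mem_cell (ε : Fin n → Fin r → Ordering) :
    IsClosed {p : (Fin n → Fin r → ℝ) × (Fin r → ℝ) | p.2 ∈ cell p.1 ε} := by
  change IsClosed ({p : (Fin n → Fin r → ℝ) × (Fin r → ℝ) | ∀ j, 0 ≤ p.2 j} ∩
    ({p | ∀ i, ∑ j, p.2 j = ∑ j, p.1 i j} ∩ {p | ∀ i j, ordRel (ε i j) (p.2 j) (p.1 i j)}))
  simp only [Set.ofPred_forall]
  exact .inter (isClosed_iInter fun j => isClosed_le (by fun_prop) (by fun_prop))
    (.inter (isClosed_iInter fun i => isClosed_eq (by fun_prop) (by fun_prop))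
      (isClosed_iInter fun i => isClosed_iInter fun j =>
        isClosed_setOf_ordRel _ (by fun_prop) (by fun_prop)))

lemma cell_subset_Icc {u : Fin n → Fin r → ℝ} {ε : Fin n → Fin r → Ordering} (i : Fin n) :
    cell u ε ⊆ Set.Icc 0 (fun _ => ∑ j, u i j) := by
  rintro x ⟨hx0, hxsum, -⟩
  refine ⟨hx0, fun j => ?_⟩
  rw [← hxsum i]
  exact Finset.single_le_sum (fun j' _ => hx0 j') (Finset.mem_univ j)

lemma cellNE_add_smul {u v : Fin n → Fin r → ℝ} {ε : Fin n → Fin r → Ordering} {t : ℝ}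
    (ht : 0 ≤ t) (hu : cellNE u ε) (hv : cellNE v ε) : cellNE (u + t • v) ε := by
  obtain ⟨x, hx0, hxsum, hxrel⟩ := hu
  obtain ⟨y, hy0, hysum, hyrel⟩ := hv
  refine ⟨x + t • y, fun j => add_nonneg (hx0 j) (mul_nonneg ht (hy0 j)), fun i => ?_,
    fun i j => ?_⟩
  · simp [Finset.sum_add_distrib, ← Finset.mul_sum, hxsum i, hysum i]
  · have hx := hxrel i j
    have hy := hyrel i j
    generalize ε i j = o at hx hy ⊢
    cases o
    · exact add_le_add hx (mul_le_mul_of_nonneg_left hy ht)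
    · exact congrArg₂ (· + t * ·) hx hy
    · exact add_le_add hx (mul_le_mul_of_nonneg_left hy ht)

lemma eventually_not_cellNE_add_smul {v u₀ : Fin n → Fin r → ℝ} {ε : Fin n → Fin r → Ordering}
    (hu₀ : ∀ i j, 0 ≤ u₀ i j) (hv : ¬ cellNE v ε) :
    ∀ᶠ t in 𝓝[>] (0 : ℝ), ¬ cellNE (v + t • u₀) ε := by
  obtain ⟨i⟩ : Nonempty (Fin n) := by
    by_contra h
    rw [not_nonempty_iff] at h
    exact hv ⟨0, fun _ => le_rfl, isEmptyElim, isEmptyElim⟩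
  set K := {p : ℝ × (Fin r → ℝ) | p.1 ∈ Set.Icc 0 1 ∧ p.2 ∈ cell (v + p.1 • u₀) ε}
  have hK : IsCompact K := by
    refine ((isCompact_Icc (a := (0 : ℝ)) (b := 1)).prod
        (isCompact_Icc (a := 0) (b := fun _ => ∑ j, (v i j + u₀ i j))))
      |>.of_isClosed_subset ((isClosed_Icc.preimage continuous_fst).inter
        ((isClosed_setOf_mem_cell ε).preimage
          (f := fun p : ℝ × (Fin r → ℝ) => (v + p.1 • u₀, p.2)) (by fun_prop))) ?_
    rintro ⟨t, x⟩ ⟨ht, hx⟩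
    refine ⟨ht, (cell_subset_Icc i hx).1, fun j => ((cell_subset_Icc i hx).2 j).trans ?_⟩
    exact Finset.sum_le_sum fun j _ => add_le_add_right (mul_le_of_le_one_left (hu₀ i j) ht.2) _
  have h0 : (0 : ℝ) ∉ Prod.fst '' K := by
    rintro ⟨⟨t, x⟩, ⟨-, hx⟩, rfl : t = 0⟩
    have hx' : x ∈ cell v ε := by simpa using hx
    exact hv ⟨x, hx'⟩
  filter_upwards [nhdsWithin_le_nhds
      ((hK.image continuous_fst).isClosed.isOpen_compl.mem_nhds h0), Ioo_mem_nhdsGT one_pos]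
    with t htK ht ⟨x, hx⟩
  exact htK ⟨(t, x), ⟨⟨ht.1.le, ht.2.le⟩, hx⟩, rfl⟩

lemma typeEquiv_symm {u v : Fin n → Fin r → ℝ} (h : typeEquiv u v) : typeEquiv v u :=
  fun ε => (h ε).symm

lemma typeEquiv_trans {u v w : Fin n → Fin r → ℝ} (h : typeEquiv u v) (h' : typeEquiv v w) :
    typeEquiv u w :=
  fun ε => (h ε).trans (h' ε)

lemma le_of_typeEquiv {u u' : Fin n → Fin r → ℝ} (hu : u ∈ coneD n r) (h : typeEquiv u u')
    {i k : Fin n} {j : Fin r} (hle : u i j ≤ u k j) : u' i j ≤ u' k j := by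
  classical
  set ε : Fin n → Fin r → Ordering := fun i' j' =>
    if i' = i then .eq else if u i j' ≤ u i' j' then .lt else .gt
  have hcell : cellNE u ε := by
    refine ⟨u i, fun j => hu.1 i j, fun k => hu.2 i k, fun i' j' => ?_⟩
    simp only [ε]
    split_ifs with h₁ h₂
    · rw [h₁]; rfl
    · exact h₂
    · exact (not_le.1 h₂).le
  obtain ⟨x, -, -, hx⟩ := (h ε).1 hcell
  have hxi : x j = u' i j := by
    have hxi := hx i j
    simp only [ε, if_pos rfl] at hxi
    exact hxi
  by_cases hki : k = i
  · rw [hki]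
  have hxk := hx k j
  simp only [ε, if_neg hki, if_pos hle] at hxk
  rwa [hxi] at hxk

lemma le_iff_le_of_typeEquiv {u u' : Fin n → Fin r → ℝ} (hu : u ∈ coneD n r)
    (hu' : u' ∈ coneD n r) (h : typeEquiv u u') (i k : Fin n) (j : Fin r) :
    u i j ≤ u k j ↔ u' i j ≤ u' k j :=
  ⟨le_of_typeEquiv hu h, le_of_typeEquiv hu' (typeEquiv_symm h)⟩

lemma add_smul_mem_coneD {u v : Fin n → Fin r → ℝ} {t : ℝ} (hu : u ∈ coneD n r)
    (hv : v ∈ coneD n r) (ht : 0 ≤ t) : u + t • v ∈ coneD n r :=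
  ⟨fun i j => add_nonneg (hu.1 i j) (mul_nonneg ht (hv.1 i j)), fun i i' => by
    simp [Finset.sum_add_distrib, ← Finset.mul_sum, hu.2 i i', hv.2 i i']⟩

def typeClass (u : Fin n → Fin r → ℝ) : Set (Fin n → Fin r → ℝ) :=
  {u' | u' ∈ coneD n r ∧ typeEquiv u u'}

lemma typeClass_eq_of_mem {u u₀ : Fin n → Fin r → ℝ} (h : u₀ ∈ typeClass u) :
    typeClass u₀ = typeClass u :=
  Set.ext fun _ => and_congr_right fun _ =>
    ⟨typeEquiv_trans h.2, typeEquiv_trans (typeEquiv_symm h.2)⟩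

lemma eventually_add_smul_mem_typeClass {u v u₀ : Fin n → Fin r → ℝ} (hv : v ∈ typeClass u)
    (hu₀ : u₀ ∈ typeClass u) : ∀ᶠ t in 𝓝[>] (0 : ℝ), v + t • u₀ ∈ typeClass u := by
  have htype : ∀ ε, ∀ᶠ t in 𝓝[>] (0 : ℝ), (cellNE u ε ↔ cellNE (v + t • u₀) ε) := by
    intro ε
    by_cases hu : cellNE u ε
    · filter_upwards [self_mem_nhdsWithin] with t ht
      exact iff_of_true hu (cellNE_add_smul (le_of_lt ht) ((hv.2 ε).1 hu) ((hu₀.2 ε).1 hu))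
    · filter_upwards [eventually_not_cellNE_add_smul hu₀.1.1 (mt (hv.2 ε).2 hu)] with t ht
      exact iff_of_false hu ht
  filter_upwards [self_mem_nhdsWithin, eventually_all.2 htype] with t ht hε
  exact ⟨add_smul_mem_coneD hv.1 hu₀.1 (le_of_lt ht), hε⟩

lemma setOf_add_smul_eq_zero_subset {u v : Fin n → Fin r → ℝ} {t : ℝ} (hu : ∀ i j, 0 ≤ u i j)
    (hv : ∀ i j, 0 ≤ v i j) (ht : 0 < t) (i : Fin n) :
    {j | (u + t • v) i j = 0} ⊆ {j | v i j = 0} := by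
  intro j hj
  have := (add_eq_zero_iff_of_nonneg (hu i j) (mul_nonneg ht.le (hv i j))).1 hj
  exact (mul_eq_zero.1 this.2).resolve_left ht.ne'

def typeClassZeros (i : Fin n) (u₀ : Fin n → Fin r → ℝ) : Set (Fin n → Fin r → ℝ) :=
  {v | v ∈ typeClass u₀ ∧ ∀ j, v i j = 0 ↔ u₀ i j = 0}

lemma exists_closure_typeClassZeros_eq_Cn {u : Fin n → Fin r → ℝ} (i : Fin n)
    (h : (typeClass u).Nonempty) :
    ∃ u₀ ∈ coneD n r, closure (typeClassZeros i u₀) = Cn u := by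
  set f := fun v : Fin n → Fin r → ℝ => {j | v i j = 0}.ncard
  set u₀ := Function.argminOn f (typeClass u) h
  have hu₀ : u₀ ∈ typeClass u := Function.argminOn_mem f _ h
  refine ⟨u₀, hu₀.1, subset_antisymm (closure_mono ?_) (closure_minimal ?_ isClosed_closure)⟩
  · rintro v ⟨hv, -⟩
    rwa [typeClass_eq_of_mem hu₀] at hv
  · intro v hv
    have hlim : Tendsto (fun t : ℝ => v + t • u₀) (𝓝[>] 0) (𝓝 v) := by
      have hcont : Continuous fun t : ℝ => v + t • u₀ := by fun_prop
      simpa using (hcont.tendsto 0).mono_left nhdsWithin_le_nhds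
    refine mem_closure_of_tendsto hlim ?_
    filter_upwards [self_mem_nhdsWithin, eventually_add_smul_mem_typeClass hv hu₀]
      with t ht hmem
    have hzeros := Set.eq_of_subset_of_ncard_le
      (setOf_add_smul_eq_zero_subset hv.1.1 hu₀.1.1 ht i) (Function.argminOn_le f _ hmem)
    exact ⟨by rwa [typeClass_eq_of_mem hu₀], fun j => Set.ext_iff.1 hzeros j⟩

lemma secD_mem_coneDP (i : Fin n) {v : Fin n → Fin r → ℝ} (hv : v ∈ coneD n r) :
    secD i v ∈ coneDP n r := by
  refine ⟨fun a j => ?_, fun a b => ?_⟩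
  · cases a <;> exact hv.1 _ j
  · cases a <;> cases b <;> exact hv.2 _ _

lemma projP_mem_coneD {w : Option (Fin n) → Fin r → ℝ} (hw : w ∈ coneDP n r) :
    projP w ∈ coneD n r :=
  ⟨fun _ _ => hw.1 _ _, fun _ _ => hw.2 _ _⟩

lemma secD_projP {i : Fin n} {w : Option (Fin n) → Fin r → ℝ}
    (h : ∀ j, w none j = w (some i) j) : secD i (projP w) = w := by
  funext a j
  cases a
  · exact (h j).symm
  · rfl

lemma isClosedEmbedding_secD (i : Fin n) :
    Topology.IsClosedEmbedding (secD (r := r) i) :=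
  (show Function.LeftInverse projP (secD (r := r) i) from fun _ => rfl).isClosedEmbedding
    (continuous_pi fun _ => continuous_apply _)
    (continuous_pi fun a => by cases a <;> exact continuous_apply _)

lemma setOf_wEquiv_secD {u₀ : Fin n → Fin r → ℝ} (hu₀ : u₀ ∈ coneD n r) (i : Fin n) :
    {w | w ∈ coneDP n r ∧ wEquiv (secD i u₀) w} = secD i '' typeClassZeros i u₀ := by
  ext w
  constructor
  · rintro ⟨hw, htype, hzero, hcmp⟩
    have hx : ∀ j, w none j = w (some i) j := fun j =>
      le_antisymm ((hcmp i j).1.1 le_rfl) ((hcmp i j).2.1 le_rfl)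
    refine ⟨projP w, ⟨⟨projP_mem_coneD hw, htype⟩, fun j => ?_⟩, secD_projP hx⟩
    change w (some i) j = 0 ↔ _
    rw [← hx j]
    exact (hzero j).symm
  · rintro ⟨v, ⟨⟨hv, htype⟩, hzero⟩, rfl⟩
    exact ⟨secD_mem_coneDP i hv, htype, fun j => (hzero j).symm, fun k j =>
      ⟨le_iff_le_of_typeEquiv hu₀ hv htype i k j, le_iff_le_of_typeEquiv hu₀ hv htype k i j⟩⟩

lemma exists_secD_image_Cn_eq_CnP {u : Fin n → Fin r → ℝ} (i : Fin n) (h : (Cn u).Nonempty) :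
    ∃ w ∈ coneDP n r, secD i '' Cn u = CnP w := by
  obtain ⟨u₀, hu₀, hcl⟩ := exists_closure_typeClassZeros_eq_Cn i (closure_nonempty_iff.1 h)
  refine ⟨secD i u₀, secD_mem_coneDP i hu₀, ?_⟩
  rw [CnP, setOf_wEquiv_secD hu₀, (isClosedEmbedding_secD i).closure_image_eq, hcl]

lemma bijOn_projP_image_secD (i : Fin n) (s : Set (Fin n → Fin r → ℝ)) :
    Set.BijOn projP (secD i '' s) s := by
  refine ⟨?_, ?_, fun v hv => ⟨secD i v, Set.mem_image_of_mem _ hv, rfl⟩⟩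
  · rintro _ ⟨v, hv, rfl⟩
    exact hv
  · rintro _ ⟨v, -, rfl⟩ _ ⟨v', -, rfl⟩ h
    exact congrArg (secD i) h

lemma mem_image_secD_and_projP_eq_iff {i : Fin n} {s : Set (Fin n → Fin r → ℝ)}
    {q : Option (Fin n) → Fin r → ℝ} {v : Fin n → Fin r → ℝ} :
    q ∈ secD i '' s ∧ projP q = v ↔ v ∈ s ∧ q = secD i v := by
  constructor
  · rintro ⟨⟨v, hv, rfl⟩, rfl⟩
    exact ⟨hv, rfl⟩
  · rintro ⟨hv, rfl⟩
    exact ⟨Set.mem_image_of_mem _ hv, rfl⟩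

end

theorem stmt17_general (n r : ℕ) (u : Fin n → Fin r → ℝ)
    (ubar : Fin n → Fin r → ℝ)
    -- the ray `cone(ρ)` over `ū` is a face of the cone `Cn u` of `Π_n(Δ)`
    (hray : ubar ∈ Cn u) (i : Fin n) :
    -- the image of the section `σ_i` over the cone is a cone of `Π_n^+(Δ)` …
    (∃ w ∈ coneDP n r, secD i '' Cn u = CnP w) ∧
    -- … mapping isomorphically under `p` onto the cone
    Set.BijOn projP (secD i '' Cn u) (Cn u) ∧
    -- it contains a unique point over `ū`
    (∃! q : Option (Fin n) → Fin r → ℝ, q ∈ secD i '' Cn u ∧ projP q = ubar) ∧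
    -- whose `x`-component is the vertex `ψ(u_i) = ū_i`
    (∀ q : Option (Fin n) → Fin r → ℝ,
        q ∈ secD i '' Cn u → projP q = ubar → q none = ubar i) ∧
    -- the labels of the marked vertices in `ψ^{-1}(v)` are exactly `I_v`
    (∀ v : Fin r → ℝ,
        {l : Fin n | ∃ q : Option (Fin n) → Fin r → ℝ,
            q ∈ secD l '' Cn u ∧ projP q = ubar ∧ q none = v}
          = {l : Fin n | ubar l = v}) := by
  refine ⟨exists_secD_image_Cn_eq_CnP i ⟨ubar, hray⟩, bijOn_projP_image_secD i _,
    ⟨secD i ubar, mem_image_secD_and_projP_eq_iff.2 ⟨hray, rfl⟩,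
      fun q hq => (mem_image_secD_and_projP_eq_iff.1 hq).2⟩, ?_, fun v => ?_⟩
  · intro q hq hpq
    rw [(mem_image_secD_and_projP_eq_iff.1 ⟨hq, hpq⟩).2]
    rfl
  · ext l
    constructor
    · rintro ⟨q, hq, hpq, rfl⟩
      rw [(mem_image_secD_and_projP_eq_iff.1 ⟨hq, hpq⟩).2]
      rfl
    · rintro rfl
      exact ⟨secD l ubar, Set.mem_image_of_mem _ hray, rfl, rfl⟩

theorem stmt17 (n r : ℕ) (u : Fin n → Fin r → ℝ) (hu : u ∈ coneD n r)
    (ubar : Fin n → Fin r → ℝ) (hbar : ∀ i, ubar i ∈ stdSimplex ℝ (Fin r))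
    -- the ray `cone(ρ)` over `ū` is a face of the cone `Cn u` of `Π_n(Δ)`
    (hray : ubar ∈ Cn u) (i : Fin n) :
    -- the image of the section `σ_i` over the cone is a cone of `Π_n^+(Δ)` …
    (∃ w ∈ coneDP n r, secD i '' Cn u = CnP w) ∧
    -- … mapping isomorphically under `p` onto the cone
    Set.BijOn projP (secD i '' Cn u) (Cn u) ∧
    -- it contains a unique point over `ū`
    (∃! q : Option (Fin n) → Fin r → ℝ, q ∈ secD i '' Cn u ∧ projP q = ubar) ∧
    -- whose `x`-component is the vertex `ψ(u_i) = ū_i`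
    (∀ q : Option (Fin n) → Fin r → ℝ,
        q ∈ secD i '' Cn u → projP q = ubar → q none = ubar i) ∧
    -- the labels of the marked vertices in `ψ^{-1}(v)` are exactly `I_v`
    (∀ v : Fin r → ℝ,
        {l : Fin n | ∃ q : Option (Fin n) → Fin r → ℝ,
            q ∈ secD l '' Cn u ∧ projP q = ubar ∧ q none = v}
          = {l : Fin n | ubar l = v}) :=
  stmt17_general n r u ubar hray i
end
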